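/- arXiv:1402.2952 — 10 statements merged into one kernel-verified Lean document; each statement's English description precedes it below -/
import Mathlib

section
/- Let H be a real Hilbert space, V a closed subspace of H with orthogonal projection P : H → V, and let v ∈ H with Pv ≠ 0 (equivalently ∠(v,V⊥) > 0). Let φ ∈ [0, π] satisfy φ < ∠(v,V⊥), set α = cos φ and α₁ = √((cos²φ − cos²∠(v,V⊥))/(1 − cos²∠(v,V⊥))) (with α₁ = cos φ when ∠(v,V⊥) > π/2, i.e. when the formula does not apply). Then for every u ∈ H, if ⟨u, v⟩ ≥ α‖u‖‖v‖ then ⟨Pu, Pv⟩ ≥ α₁‖Pu‖‖Pv‖. -/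
/-!
Split `u = Pu + Qu` and `v = Pv + Qv` along `V ⊕ V⊥`, so that `⟪u, v⟫ = ⟪Pu, Pv⟫ + ⟪Qu, Qv⟫`,
with `‖Qv‖ = cos ∠(v, V⊥) ‖v‖`. Hence `⟪Pu, Pv⟫ ≥ α ‖u‖ ‖v‖ - ‖Qu‖ ‖Qv‖`, and the two-dimensional
Cauchy–Schwarz inequality for `(‖Qu‖, ‖Pu‖)` and `(‖Qv‖, √(α²‖v‖² - ‖Qv‖²))` bounds this below by
`√(α²‖v‖² - ‖Qv‖²) ‖Pu‖`, which is `α₁ ‖Pu‖ ‖Pv‖` since `‖Pv‖² = ‖v‖² - ‖Qv‖²`.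
-/

open scoped RealInnerProductSpace

theorem mul_add_mul_le_mul_of_sq_add_sq_eq {a b c d r s : ℝ} (hr : 0 ≤ r) (hs : 0 ≤ s)
    (hab : a ^ 2 + b ^ 2 = r ^ 2) (hcd : c ^ 2 + d ^ 2 = s ^ 2) : a * c + b * d ≤ r * s := by
  nlinarith [sq_nonneg (a * d - b * c), mul_nonneg hr hs]

theorem Real.sqrt_div_one_sub_div_sq_mul {α c d n : ℝ} (hc : 0 < c) (hn : n ^ 2 = c ^ 2 + d ^ 2) :
    √((α ^ 2 - (d / n) ^ 2) / (1 - (d / n) ^ 2)) * c = √((α * n) ^ 2 - d ^ 2) := by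
  have hn0 : n ≠ 0 := by
    rintro rfl
    nlinarith
  have hsin : 1 - (d / n) ^ 2 = (c / n) ^ 2 := by
    field_simp
    linear_combination hn
  have hratio : (α ^ 2 - (d / n) ^ 2) / (1 - (d / n) ^ 2) = ((α * n) ^ 2 - d ^ 2) / c ^ 2 := by
    rw [hsin]
    field_simp
  rw [hratio, Real.sqrt_div' _ (sq_nonneg c), Real.sqrt_sq hc.le, div_mul_cancel₀ _ hc.ne']

namespace Submodule

section RCLike

variable {𝕜 E : Type*} [RCLike 𝕜] [NormedAddCommGroup E] [InnerProductSpace 𝕜 E]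
  (K : Submodule 𝕜 E) [K.HasOrthogonalProjection]

theorem inner_eq_inner_starProjection_add_inner_starProjection_orthogonal (u v : E) :
    inner 𝕜 u v = inner 𝕜 (K.starProjection u) (K.starProjection v) +
      inner 𝕜 (Kᗮ.starProjection u) (Kᗮ.starProjection v) := by
  conv_lhs =>
    rw [← K.starProjection_add_starProjection_orthogonal u,
      ← K.starProjection_add_starProjection_orthogonal v]
  rw [inner_add_left, inner_add_right, inner_add_right,
    inner_right_of_mem_orthogonal (K.starProjection_apply_mem u) (Kᗮ.starProjection_apply_mem v),
    inner_left_of_mem_orthogonal (K.starProjection_apply_mem v) (Kᗮ.starProjection_apply_mem u)]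
  ring

end RCLike

section Real

variable {E : Type*} [NormedAddCommGroup E] [InnerProductSpace ℝ E]
  (K : Submodule ℝ E) [K.HasOrthogonalProjection]

theorem sqrt_sq_sub_sq_mul_norm_starProjection_le_inner {u v : E} {α : ℝ}
    (hv : ‖Kᗮ.starProjection v‖ ≤ α * ‖v‖) (hu : α * (‖u‖ * ‖v‖) ≤ ⟪u, v⟫) :
    √((α * ‖v‖) ^ 2 - ‖Kᗮ.starProjection v‖ ^ 2) * ‖K.starProjection u‖ ≤
      ⟪K.starProjection u, K.starProjection v⟫ := by
  have hαv : 0 ≤ α * ‖v‖ := (norm_nonneg _).trans hv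
  have hsqrt : ‖Kᗮ.starProjection v‖ ^ 2 + √((α * ‖v‖) ^ 2 - ‖Kᗮ.starProjection v‖ ^ 2) ^ 2 =
      (α * ‖v‖) ^ 2 := by
    rw [Real.sq_sqrt (sub_nonneg.2 (pow_le_pow_left₀ (norm_nonneg _) hv 2))]
    ring
  have hcs := mul_add_mul_le_mul_of_sq_add_sq_eq (norm_nonneg u) hαv
    ((add_comm _ _).trans (K.norm_sq_eq_add_norm_sq_starProjection u).symm) hsqrt
  have := real_inner_le_norm (Kᗮ.starProjection u) (Kᗮ.starProjection v)
  rw [K.inner_eq_inner_starProjection_add_inner_starProjection_orthogonal] at hu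
  linarith

end Real

end Submodule

theorem stmt0_general {H : Type*} [NormedAddCommGroup H] [InnerProductSpace ℝ H]
    (V : Submodule ℝ H) [CompleteSpace V]
    (v : H) (hPv : (V.orthogonalProjectionOnto v : H) ≠ 0)
    (ψ : ℝ) (hψ : ψ = Real.arccos (‖v - (V.orthogonalProjectionOnto v : H)‖ / ‖v‖))
    (φ : ℝ) (hφ0 : 0 ≤ φ) (hφψ : φ < ψ)
    (α α₁ : ℝ) (hα : α = Real.cos φ)
    (hα₁ : α₁ = if ψ ≤ Real.pi / 2 then
        Real.sqrt ((Real.cos φ ^ 2 - Real.cos ψ ^ 2) / (1 - Real.cos ψ ^ 2))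
      else Real.cos φ)
    (u : H) (hu : ⟪u, v⟫ ≥ α * (‖u‖ * ‖v‖)) :
    ⟪(V.orthogonalProjectionOnto u : H), (V.orthogonalProjectionOnto v : H)⟫ ≥
      α₁ * (‖(V.orthogonalProjectionOnto u : H)‖ * ‖(V.orthogonalProjectionOnto v : H)‖) := by
  simp only [Submodule.coe_orthogonalProjectionOnto_apply,
    ← Submodule.starProjection_orthogonal_val] at hPv hψ ⊢
  set β := ‖Vᗮ.starProjection v‖ / ‖v‖
  have hβ0 : 0 ≤ β := by positivity
  have hβ1 : β ≤ 1 := div_le_one_of_le₀ (Vᗮ.norm_starProjection_apply_le v) (norm_nonneg v)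
  have hcosψ : Real.cos ψ = β := hψ ▸ Real.cos_arccos (by linarith) hβ1
  have hψπ : ψ ≤ Real.pi / 2 := hψ ▸ Real.arccos_le_pi_div_two.2 hβ0
  have hβα : β ≤ α := hα ▸ hcosψ ▸
    Real.cos_le_cos_of_nonneg_of_le_pi hφ0 (by linarith [Real.pi_pos]) hφψ.le
  have hvpos : 0 < ‖v‖ := norm_pos_iff.2 fun hv ↦ hPv (by simp [hv])
  have hα₁Pv : α₁ * ‖V.starProjection v‖ = √((α * ‖v‖) ^ 2 - ‖Vᗮ.starProjection v‖ ^ 2) := by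
    rw [hα₁, if_pos hψπ, hcosψ, ← hα]
    exact Real.sqrt_div_one_sub_div_sq_mul (norm_pos_iff.2 hPv)
      (V.norm_sq_eq_add_norm_sq_starProjection v)
  calc α₁ * (‖V.starProjection u‖ * ‖V.starProjection v‖)
      = √((α * ‖v‖) ^ 2 - ‖Vᗮ.starProjection v‖ ^ 2) * ‖V.starProjection u‖ := by
        rw [← hα₁Pv]; ring
    _ ≤ ⟪V.starProjection u, V.starProjection v⟫ :=
        V.sqrt_sq_sub_sq_mul_norm_starProjection_le_inner ((div_le_iff₀ hvpos).1 hβα) hu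

/-- Let `H` be a real Hilbert space, `V` a closed subspace with orthogonal
projection `P : H → V`, and `v ∈ H` with `P v ≠ 0`.  Let `φ ∈ [0, π]` satisfy
`φ < ∠(v, V⊥) = arccos (‖v - P v‖ / ‖v‖)`, set `α = cos φ` and
`α₁ = √((cos² φ - cos² ∠(v,V⊥)) / (1 - cos² ∠(v,V⊥)))` (with `α₁ = cos φ` when
`∠(v,V⊥) > π/2`).  Then for every `u ∈ H`, if `⟨u, v⟩ ≥ α ‖u‖ ‖v‖` then
`⟨P u, P v⟩ ≥ α₁ ‖P u‖ ‖P v‖`. -/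
theorem stmt0 {H : Type*} [NormedAddCommGroup H] [InnerProductSpace ℝ H] [CompleteSpace H]
    (V : Submodule ℝ H) [CompleteSpace V]
    (v : H) (hPv : (V.orthogonalProjectionOnto v : H) ≠ 0)
    (ψ : ℝ) (hψ : ψ = Real.arccos (‖v - (V.orthogonalProjectionOnto v : H)‖ / ‖v‖))
    (φ : ℝ) (hφ0 : 0 ≤ φ) (hφπ : φ ≤ Real.pi) (hφψ : φ < ψ)
    (α α₁ : ℝ) (hα : α = Real.cos φ)
    (hα₁ : α₁ = if ψ ≤ Real.pi / 2 then
        Real.sqrt ((Real.cos φ ^ 2 - Real.cos ψ ^ 2) / (1 - Real.cos ψ ^ 2))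
      else Real.cos φ)
    (u : H) (hu : ⟪u, v⟫ ≥ α * (‖u‖ * ‖v‖)) :
    ⟪(V.orthogonalProjectionOnto u : H), (V.orthogonalProjectionOnto v : H)⟫ ≥
      α₁ * (‖(V.orthogonalProjectionOnto u : H)‖ * ‖(V.orthogonalProjectionOnto v : H)‖) :=
  stmt0_general V v hPv ψ hψ φ hφ0 hφψ α α₁ hα hα₁ u hu
end

section
/- Let H be a real Hilbert space, V a closed subspace of H with dim V ≥ 2 and orthogonal projection P : H → V, and let v ∈ H with v ≠ 0 and φ ∈ [0, π] with φ < ∠(v,V⊥). Set α = cos φ and α₁ = √((cos²φ − cos²∠(v,V⊥))/(1 − cos²∠(v,V⊥))) when ∠(v,V⊥) ∈ (0, π/2], and α₁ = cos φ otherwise. Then there exists u ∈ H such that Pu ≠ 0, ⟨u, v⟩ ≥ α‖u‖‖v‖, and ⟨Pu, Pv⟩ = α₁‖Pu‖‖Pv‖. In particular, α₁ is the largest constant for which the implication ⟨u,v⟩ ≥ α‖u‖‖v‖ ⟹ ⟨Pu,Pv⟩ ≥ α₁‖Pu‖‖Pv‖ can hold for all u. -/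
/-!
Write `v = p + w` with `p = P v ∈ V` and `w ∈ V⊥`, so that `‖w‖ = t ‖v‖` with `t = cos ∠(v,V⊥)`;
as `t ≥ 0`, the angle lies in `(φ, π/2]` and `α₁ = √((cos²φ - t²)/(1 - t²))`. Since `dim V ≥ 2`, `p`
can be rotated inside `V` by the angle `arccos α₁` and scaled by `α₁`, giving `y ∈ V` with
`‖y‖ = α₁ ‖p‖` and `⟨y, p⟩ = α₁² ‖p‖²`. For `u = y + w` we get `P u = y`, hence
`⟨P u, P v⟩ = α₁ ‖P u‖ ‖P v‖`, and `⟨u, v⟩ = ‖u‖² = α₁² ‖p‖² + ‖w‖² = cos²φ ‖v‖²`, which is exactly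
`⟨u, v⟩ = cos φ ‖u‖ ‖v‖`.
-/

open scoped RealInnerProductSpace

theorem Real.sqrt_sq_sub_sq_div_one_sub_sq {t c : ℝ} (ht : 0 ≤ t) (htc : t < c) (hc : c ≤ 1) :
    0 < √((c ^ 2 - t ^ 2) / (1 - t ^ 2)) ∧ √((c ^ 2 - t ^ 2) / (1 - t ^ 2)) ≤ 1 ∧
      √((c ^ 2 - t ^ 2) / (1 - t ^ 2)) ^ 2 * (1 - t ^ 2) + t ^ 2 = c ^ 2 := by
  have hnum : 0 < c ^ 2 - t ^ 2 := by nlinarith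
  have hden : 0 < 1 - t ^ 2 := by nlinarith
  refine ⟨Real.sqrt_pos.mpr (by positivity), Real.sqrt_le_one.mpr ?_, ?_⟩
  · rw [div_le_one hden]; nlinarith
  · rw [Real.sq_sqrt (by positivity), div_mul_cancel₀ _ hden.ne']
    ring

section

variable {E : Type*} [NormedAddCommGroup E] [InnerProductSpace ℝ E]

theorem exists_norm_eq_one_inner_eq_zero (hE : 2 ≤ Module.rank ℝ E) (x : E) :
    ∃ e : E, ‖e‖ = 1 ∧ ⟪x, e⟫ = 0 := by
  have hne : (ℝ ∙ x)ᗮ ≠ ⊥ := by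
    rw [Ne, Submodule.orthogonal_eq_bot_iff]
    intro htop
    have h := rank_span_le (R := ℝ) ({x} : Set E)
    rw [htop, rank_top] at h
    have := hE.trans h
    simp at this
  obtain ⟨y, hy, hy0⟩ := (Submodule.ne_bot_iff _).mp hne
  refine ⟨‖y‖⁻¹ • y, norm_smul_inv_norm hy0, ?_⟩
  rw [real_inner_smul_right, Submodule.mem_orthogonal_singleton_iff_inner_right.mp hy, mul_zero]

theorem exists_norm_eq_mul_inner_eq_sq_mul (hE : 2 ≤ Module.rank ℝ E) (x : E) {a : ℝ}
    (ha0 : 0 ≤ a) (ha1 : a ≤ 1) :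
    ∃ y : E, ‖y‖ = a * ‖x‖ ∧ ⟪y, x⟫ = a ^ 2 * ‖x‖ ^ 2 := by
  obtain ⟨e, he, hxe⟩ := exists_norm_eq_one_inner_eq_zero hE x
  have hb : √(1 - a ^ 2) ^ 2 = 1 - a ^ 2 := Real.sq_sqrt (by nlinarith)
  -- rotate `x` by the angle `arccos a` inside the plane spanned by `x` and `e`, then scale by `a`
  set z := a • x + (√(1 - a ^ 2) * ‖x‖) • e
  have hz : ‖z‖ = ‖x‖ := by
    rw [← sq_eq_sq₀ (norm_nonneg _) (norm_nonneg _), ← real_inner_self_eq_norm_sq]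
    simp only [z, inner_add_left, inner_add_right, real_inner_smul_left, real_inner_smul_right,
      hxe, real_inner_comm x e]
    simp only [real_inner_self_eq_norm_sq, he]
    linear_combination ‖x‖ ^ 2 * hb
  refine ⟨a • z, by rw [norm_smul, hz, Real.norm_of_nonneg ha0], ?_⟩
  simp only [z, inner_add_left, real_inner_smul_left, real_inner_self_eq_norm_sq,
    real_inner_comm x e, hxe]
  ring

end

namespace Submodule

variable {H : Type*} [NormedAddCommGroup H] [InnerProductSpace ℝ H]

theorem exists_inner_starProjection_eq_mul_norm_mul_norm (V : Submodule ℝ H)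
    [V.HasOrthogonalProjection] (hV : 2 ≤ Module.rank ℝ V) (v : H) {a : ℝ} (ha0 : 0 ≤ a)
    (ha1 : a ≤ 1) :
    ∃ u : H, ‖u‖ ^ 2 = a ^ 2 * ‖V.starProjection v‖ ^ 2 + ‖v - V.starProjection v‖ ^ 2 ∧
      ⟪u, v⟫ = ‖u‖ ^ 2 ∧ ‖V.starProjection u‖ = a * ‖V.starProjection v‖ ∧
      ⟪V.starProjection u, V.starProjection v⟫ =
        a * (‖V.starProjection u‖ * ‖V.starProjection v‖) := by
  set p := V.starProjection v
  set w := v - p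
  have hw : w ∈ Vᗮ := V.sub_starProjection_mem_orthogonal v
  obtain ⟨y, hy, hyp⟩ : ∃ y : V, ‖(y : H)‖ = a * ‖p‖ ∧ ⟪(y : H), p⟫ = a ^ 2 * ‖p‖ ^ 2 :=
    exists_norm_eq_mul_inner_eq_sq_mul hV ⟨p, V.starProjection_apply_mem v⟩ ha0 ha1
  have hPu : V.starProjection (y + w) = y :=
    eq_starProjection_of_mem_orthogonal y.2 (by rwa [add_sub_cancel_left])
  have hyw : ⟪(y : H), w⟫ = 0 := V.inner_right_of_mem_orthogonal y.2 hw
  have hwp : ⟪w, p⟫ = 0 := V.inner_left_of_mem_orthogonal (V.starProjection_apply_mem v) hw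
  have hu : ‖(y : H) + w‖ ^ 2 = a ^ 2 * ‖p‖ ^ 2 + ‖w‖ ^ 2 := by
    rw [sq, norm_add_sq_eq_norm_sq_add_norm_sq_real hyw, hy]
    ring
  refine ⟨y + w, hu, ?_, by rw [hPu, hy], by rw [hPu, hyp, hy]; ring⟩
  rw [hu, ← sub_add_cancel v p, inner_add_left, inner_add_right, inner_add_right, hyp, hyw, hwp,
    real_inner_self_eq_norm_sq]
  ring

theorem exists_inner_eq_cos_mul_and_inner_starProjection_eq (V : Submodule ℝ H)
    [V.HasOrthogonalProjection] (hV : 2 ≤ Module.rank ℝ V) {v : H} (hv : v ≠ 0) {t c : ℝ}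
    (ht : ‖v - V.starProjection v‖ = t * ‖v‖) (htc : t < c) (hc : c ≤ 1) :
    ∃ u : H, V.starProjection u ≠ 0 ∧ ⟪u, v⟫ = c * (‖u‖ * ‖v‖) ∧
      ⟪V.starProjection u, V.starProjection v⟫ =
        √((c ^ 2 - t ^ 2) / (1 - t ^ 2)) * (‖V.starProjection u‖ * ‖V.starProjection v‖) := by
  set p := V.starProjection v
  have hv0 : 0 < ‖v‖ := norm_pos_iff.mpr hv
  have ht0 : 0 ≤ t := nonneg_of_mul_nonneg_left (ht ▸ norm_nonneg _) hv0
  have hp : ‖p‖ ^ 2 = (1 - t ^ 2) * ‖v‖ ^ 2 := by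
    have := V.norm_sq_eq_add_norm_sq_starProjection v
    rw [starProjection_orthogonal_val, ht] at this
    linarith
  have hp0 : ‖p‖ ≠ 0 := by
    have : 0 < 1 - t ^ 2 := by nlinarith
    rw [← pow_ne_zero_iff two_ne_zero, hp]
    positivity
  obtain ⟨ha0, ha1, ha⟩ := Real.sqrt_sq_sub_sq_div_one_sub_sq ht0 htc hc
  obtain ⟨u, hu, huv, hPu, hPuv⟩ :=
    V.exists_inner_starProjection_eq_mul_norm_mul_norm hV v ha0.le ha1
  have hnorm_u : ‖u‖ = c * ‖v‖ := by
    rw [← sq_eq_sq₀ (norm_nonneg u) (mul_nonneg (ht0.trans htc.le) hv0.le), hu, hp, ht]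
    linear_combination ‖v‖ ^ 2 * ha
  refine ⟨u, norm_ne_zero_iff.mp (by rw [hPu]; exact mul_ne_zero ha0.ne' hp0), ?_, hPuv⟩
  rw [huv, hnorm_u]
  ring

end Submodule

theorem stmt1_general {H : Type*} [NormedAddCommGroup H] [InnerProductSpace ℝ H]
    (V : Submodule ℝ H) [CompleteSpace V] (hV : 2 ≤ Module.rank ℝ V)
    (v : H) (hv : v ≠ 0)
    (ψ : ℝ) (hψ : ψ = Real.arccos (‖v - (V.orthogonalProjection v : H)‖ / ‖v‖))
    (φ : ℝ) (hφ0 : 0 ≤ φ) (hφπ : φ ≤ Real.pi) (hφψ : φ < ψ)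
    (α α₁ : ℝ) (hα : α = Real.cos φ)
    (hα₁ : α₁ = if 0 < ψ ∧ ψ ≤ Real.pi / 2 then
        Real.sqrt ((Real.cos φ ^ 2 - Real.cos ψ ^ 2) / (1 - Real.cos ψ ^ 2))
      else Real.cos φ) :
    ∃ u : H, (V.orthogonalProjection u : H) ≠ 0 ∧
      ⟪u, v⟫ ≥ α * (‖u‖ * ‖v‖) ∧
      ⟪(V.orthogonalProjection u : H), (V.orthogonalProjection v : H)⟫ =
        α₁ * (‖(V.orthogonalProjection u : H)‖ * ‖(V.orthogonalProjection v : H)‖) := by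
  simp only [Submodule.coe_orthogonalProjectionOnto_apply] at hψ ⊢
  set t := ‖v - V.starProjection v‖ / ‖v‖
  have ht : ‖v - V.starProjection v‖ = t * ‖v‖ :=
    (div_mul_cancel₀ _ (norm_ne_zero_iff.mpr hv)).symm
  have ht0 : 0 ≤ t := by positivity
  have ht1 : t ≤ 1 := by
    refine div_le_one_of_le₀ ?_ (norm_nonneg v)
    simpa only [Submodule.starProjection_orthogonal_val] using Vᗮ.norm_starProjection_apply_le v
  have hcosψ : Real.cos ψ = t := hψ ▸ Real.cos_arccos (by linarith) ht1
  have hψ_mem : 0 < ψ ∧ ψ ≤ Real.pi / 2 :=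
    ⟨hφ0.trans_lt hφψ, hψ ▸ Real.arccos_le_pi_div_two.mpr ht0⟩
  have htc : t < Real.cos φ := hcosψ ▸ Real.strictAntiOn_cos ⟨hφ0, hφπ⟩
    ⟨hψ_mem.1.le, hψ_mem.2.trans (by linarith [Real.pi_pos])⟩ hφψ
  rw [if_pos hψ_mem, hcosψ] at hα₁
  obtain ⟨u, hPu, huv, hPuv⟩ := V.exists_inner_eq_cos_mul_and_inner_starProjection_eq hV hv ht htc
    (Real.cos_le_one φ)
  exact ⟨u, hPu, hα ▸ huv.ge, hα₁ ▸ hPuv⟩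

/-- If `dim V ≥ 2`, `v ≠ 0` and `0 ≤ φ < ∠(v,V⊥)`, with `α = cos φ` and
`α₁ = √((cos²φ - cos²∠(v,V⊥))/(1 - cos²∠(v,V⊥)))` when `∠(v,V⊥) ∈ (0, π/2]` and
`α₁ = cos φ` otherwise, then there exists `u` with `P u ≠ 0`, `⟨u,v⟩ ≥ α ‖u‖ ‖v‖` and
`⟨P u, P v⟩ = α₁ ‖P u‖ ‖P v‖`; so `α₁` is optimal in Statement 0. -/
theorem stmt1 {H : Type*} [NormedAddCommGroup H] [InnerProductSpace ℝ H] [CompleteSpace H]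
    (V : Submodule ℝ H) [CompleteSpace V] (hV : 2 ≤ Module.rank ℝ V)
    (v : H) (hv : v ≠ 0)
    (ψ : ℝ) (hψ : ψ = Real.arccos (‖v - (V.orthogonalProjection v : H)‖ / ‖v‖))
    (φ : ℝ) (hφ0 : 0 ≤ φ) (hφπ : φ ≤ Real.pi) (hφψ : φ < ψ)
    (α α₁ : ℝ) (hα : α = Real.cos φ)
    (hα₁ : α₁ = if 0 < ψ ∧ ψ ≤ Real.pi / 2 then
        Real.sqrt ((Real.cos φ ^ 2 - Real.cos ψ ^ 2) / (1 - Real.cos ψ ^ 2))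
      else Real.cos φ) :
    ∃ u : H, (V.orthogonalProjection u : H) ≠ 0 ∧
      ⟪u, v⟫ ≥ α * (‖u‖ * ‖v‖) ∧
      ⟪(V.orthogonalProjection u : H), (V.orthogonalProjection v : H)⟫ =
        α₁ * (‖(V.orthogonalProjection u : H)‖ * ‖(V.orthogonalProjection v : H)‖) :=
  stmt1_general V hV v hv ψ hψ φ hφ0 hφπ hφψ α α₁ hα hα₁
end

section
/- Let H be a real Hilbert space, V a closed subspace of H with dim V ≥ 1 and V ≠ H, and P : H → V the orthogonal projection. Let v ∈ H, v ≠ 0, and let φ ∈ (∠(v,V⊥), π], with α = cos φ. Then there exists u ∈ H such that Pu ≠ 0, ⟨u, v⟩ ≥ α‖u‖‖v‖, and ⟨Pu, Pv⟩ = −‖Pu‖‖Pv‖. -/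
open scoped RealInnerProductSpace

/-!
Write `v = p + w` with `p = P v ∈ V` and `w = v - P v ∈ V⊥`, so that `ψ = ∠(v, V⊥)` satisfies
`‖w‖ = ‖v‖ cos ψ` and `‖p‖ = ‖v‖ sin ψ`. Pick unit vectors `e ∈ V` pointing against `p` and
`z ∈ V⊥` pointing along `w`, and rotate `z` towards `e` by `θ = (φ - ψ) / 2`:
`u = cos θ • z + sin θ • e` is a unit vector with `P u = sin θ • e`, which is a positive multiple
of `-P v`, and `⟪u, v⟫ = ‖v‖ cos (θ + ψ) ≥ ‖v‖ cos φ` because `0 ≤ θ + ψ ≤ φ ≤ π`.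
-/

open Real

section

variable {E : Type*} [NormedAddCommGroup E] [InnerProductSpace ℝ E]

theorem Real.mul_cos_arccos_div {a b c : ℝ} (hc : 0 < c) (hb : 0 ≤ b) (h : a ^ 2 + b ^ 2 = c ^ 2) :
    c * cos (arccos (b / c)) = b := by
  have hbc : b ≤ c := by nlinarith
  rw [cos_arccos (by linarith [div_nonneg hb hc.le]) ((div_le_one hc).2 hbc)]
  field_simp

theorem Real.mul_sin_arccos_div {a b c : ℝ} (hc : 0 < c) (ha : 0 ≤ a) (h : a ^ 2 + b ^ 2 = c ^ 2) :
    c * sin (arccos (b / c)) = a := by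
  rw [sin_arccos, show 1 - (b / c) ^ 2 = (a / c) ^ 2 by field_simp; linarith,
    sqrt_sq (by positivity)]
  field_simp

theorem Submodule.exists_norm_eq_one_inner_eq_norm {K : Submodule ℝ E} (hK : K ≠ ⊥) {x : E}
    (hx : x ∈ K) : ∃ e ∈ K, ‖e‖ = 1 ∧ ⟪e, x⟫ = ‖x‖ := by
  rcases eq_or_ne x 0 with rfl | hx0
  · obtain ⟨y, hyK, hy0⟩ := K.exists_mem_ne_zero_of_ne_bot hK
    exact ⟨‖y‖⁻¹ • y, K.smul_mem _ hyK, norm_smul_inv_norm hy0, by simp⟩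
  · refine ⟨‖x‖⁻¹ • x, K.smul_mem _ hx, norm_smul_inv_norm hx0, ?_⟩
    rw [real_inner_smul_left, real_inner_self_eq_norm_sq]
    field_simp

theorem norm_cos_smul_add_sin_smul {z e : E} (hz : ‖z‖ = 1) (he : ‖e‖ = 1) (hze : ⟪z, e⟫ = 0)
    (θ : ℝ) : ‖cos θ • z + sin θ • e‖ = 1 := by
  have horth : ⟪cos θ • z, sin θ • e⟫ = 0 := by
    rw [real_inner_smul_left, real_inner_smul_right, hze, mul_zero, mul_zero]
  refine (pow_left_inj₀ (norm_nonneg _) zero_le_one two_ne_zero).mp ?_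
  rw [norm_add_sq_real, horth, norm_smul, norm_smul, hz, he, norm_eq_abs, norm_eq_abs]
  simp only [mul_one, mul_zero, add_zero, sq_abs, cos_sq_add_sin_sq, one_pow]

theorem Submodule.inner_starProjection_eq_of_mem_left (K : Submodule ℝ E)
    [K.HasOrthogonalProjection] {e : E} (he : e ∈ K) (v : E) : ⟪e, K.starProjection v⟫ = ⟪e, v⟫ := by
  rw [← K.inner_starProjection_left_eq_right, K.starProjection_eq_self_iff.mpr he]

theorem inner_cos_smul_add_sin_smul {z e v : E} {r ψ : ℝ} (hz : ⟪z, v⟫ = r * cos ψ)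
    (he : ⟪e, v⟫ = -(r * sin ψ)) (θ : ℝ) : ⟪cos θ • z + sin θ • e, v⟫ = r * cos (θ + ψ) := by
  rw [inner_add_left, real_inner_smul_left, real_inner_smul_left, hz, he, cos_add]
  ring

end

theorem stmt2_general {H : Type*} [NormedAddCommGroup H] [InnerProductSpace ℝ H]
    (V : Submodule ℝ H) [CompleteSpace V] (hV1 : V ≠ ⊥) (hV2 : V ≠ ⊤)
    (v : H) (hv : v ≠ 0)
    (ψ : ℝ) (hψ : ψ = Real.arccos (‖v - (V.orthogonalProjectionOnto v : H)‖ / ‖v‖))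
    (φ : ℝ) (hφψ : ψ < φ) (hφπ : φ ≤ Real.pi)
    (α : ℝ) (hα : α = Real.cos φ) :
    ∃ u : H, (V.orthogonalProjectionOnto u : H) ≠ 0 ∧
      ⟪u, v⟫ ≥ α * (‖u‖ * ‖v‖) ∧
      ⟪(V.orthogonalProjectionOnto u : H), (V.orthogonalProjectionOnto v : H)⟫ =
        -(‖(V.orthogonalProjectionOnto u : H)‖ * ‖(V.orthogonalProjectionOnto v : H)‖) := by
  simp only [Submodule.coe_orthogonalProjectionOnto_apply,
    ← V.starProjection_orthogonal_val] at hψ ⊢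
  have hvn : 0 < ‖v‖ := norm_pos_iff.mpr hv
  have hpyth := (V.norm_sq_eq_add_norm_sq_starProjection v).symm
  obtain ⟨e, heV, he, hep⟩ :=
    V.exists_norm_eq_one_inner_eq_norm hV1 (V.neg_mem (V.starProjection_apply_mem v))
  obtain ⟨z, hzV, hz, hzw⟩ := Vᗮ.exists_norm_eq_one_inner_eq_norm
    (by rwa [Ne, Submodule.orthogonal_eq_bot_iff]) (Vᗮ.starProjection_apply_mem v)
  rw [inner_neg_right, norm_neg, neg_eq_iff_eq_neg] at hep
  have hev : ⟪e, v⟫ = -(‖v‖ * sin ψ) := by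
    rw [← V.inner_starProjection_eq_of_mem_left heV, hep, hψ,
      mul_sin_arccos_div hvn (norm_nonneg _) hpyth]
  have hzv : ⟪z, v⟫ = ‖v‖ * cos ψ := by
    rw [← Vᗮ.inner_starProjection_eq_of_mem_left hzV, hzw, hψ,
      mul_cos_arccos_div hvn (norm_nonneg _) hpyth]
  set θ := (φ - ψ) / 2 with hθ
  have hψ0 : 0 ≤ ψ := hψ ▸ arccos_nonneg _
  have hsinθ : 0 < sin θ := sin_pos_of_pos_of_lt_pi (by linarith) (by linarith [pi_pos])
  have hPu : V.starProjection (cos θ • z + sin θ • e) = sin θ • e := by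
    simp [V.starProjection_apply_eq_zero_iff.mpr hzV, V.starProjection_eq_self_iff.mpr heV]
  refine ⟨cos θ • z + sin θ • e, ?_, ?_, ?_⟩
  · rw [hPu]
    exact smul_ne_zero hsinθ.ne' (norm_ne_zero_iff.mp (he ▸ one_ne_zero))
  · rw [inner_cos_smul_add_sin_smul hzv hev,
      norm_cos_smul_add_sin_smul hz he (V.inner_left_of_mem_orthogonal heV hzV), hα, one_mul,
      mul_comm (cos φ)]
    exact mul_le_mul_of_nonneg_left
      (cos_le_cos_of_nonneg_of_le_pi (by linarith) hφπ (by linarith)) hvn.le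
  · rw [hPu, real_inner_smul_left, norm_smul, he, norm_of_nonneg hsinθ.le, hep]
    ring

/-- If `dim V ≥ 1`, `V ≠ H`, `v ≠ 0` and `φ ∈ (∠(v,V⊥), π]`, `α = cos φ`,
then there exists `u` with `P u ≠ 0`, `⟨u,v⟩ ≥ α ‖u‖ ‖v‖` and
`⟨P u, P v⟩ = -‖P u‖ ‖P v‖`. -/
theorem stmt2 {H : Type*} [NormedAddCommGroup H] [InnerProductSpace ℝ H] [CompleteSpace H]
    (V : Submodule ℝ H) [CompleteSpace V] (hV1 : V ≠ ⊥) (hV2 : V ≠ ⊤)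
    (v : H) (hv : v ≠ 0)
    (ψ : ℝ) (hψ : ψ = Real.arccos (‖v - (V.orthogonalProjectionOnto v : H)‖ / ‖v‖))
    (φ : ℝ) (hφψ : ψ < φ) (hφπ : φ ≤ Real.pi)
    (α : ℝ) (hα : α = Real.cos φ) :
    ∃ u : H, (V.orthogonalProjectionOnto u : H) ≠ 0 ∧
      ⟪u, v⟫ ≥ α * (‖u‖ * ‖v‖) ∧
      ⟪(V.orthogonalProjectionOnto u : H), (V.orthogonalProjectionOnto v : H)⟫ =
        -(‖(V.orthogonalProjectionOnto u : H)‖ * ‖(V.orthogonalProjectionOnto v : H)‖) :=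
  stmt2_general V hV1 hV2 v hv ψ hψ φ hφψ hφπ α hα
end

section
/- Let H be a real Hilbert space, V a closed subspace of H with V ≠ H, and P : H → V the orthogonal projection. Let v ∈ H, v ≠ 0, with ∠(v,V⊥) > 0 (i.e. Pv ≠ 0). Then for all u ∈ H, if ⟨u, v⟩ ≥ cos∠(v,V⊥) · ‖u‖‖v‖ then ⟨Pu, Pv⟩ ≥ 0. -/
/-!
Split `u` and `v` into their components in `V` and `Vᗮ`: then
`⟪u, v⟫ = ⟪P u, P v⟫ + ⟪u - P u, v - P v⟫`, and by Cauchy–Schwarz the second term is at most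
`‖u‖ ‖v - P v‖ = cos ∠(v, Vᗮ) ‖u‖ ‖v‖`, which the hypothesis bounds by `⟪u, v⟫`.
-/

open scoped RealInnerProductSpace InnerProductSpace

namespace Submodule

theorem inner_eq_inner_starProjection_add_inner_sub_starProjection {𝕜 E : Type*} [RCLike 𝕜]
    [NormedAddCommGroup E] [InnerProductSpace 𝕜 E] (K : Submodule 𝕜 E)
    [K.HasOrthogonalProjection] (u v : E) :
    ⟪u, v⟫_𝕜 = ⟪K.starProjection u, K.starProjection v⟫_𝕜 +
      ⟪u - K.starProjection u, v - K.starProjection v⟫_𝕜 := by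
  have hPu_Qv : ⟪K.starProjection u, v - K.starProjection v⟫_𝕜 = 0 :=
    inner_right_of_mem_orthogonal (K.starProjection_apply_mem u)
      (K.sub_starProjection_mem_orthogonal v)
  have hQu_Pv : ⟪u - K.starProjection u, K.starProjection v⟫_𝕜 = 0 :=
    inner_left_of_mem_orthogonal (K.starProjection_apply_mem v)
      (K.sub_starProjection_mem_orthogonal u)
  conv_lhs => rw [← add_sub_cancel (K.starProjection u) u, ← add_sub_cancel (K.starProjection v) v]
  rw [inner_add_left, inner_add_right, inner_add_right, hPu_Qv, hQu_Pv, add_zero, zero_add]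

variable {E : Type*} [NormedAddCommGroup E] [InnerProductSpace ℝ E] (K : Submodule ℝ E)
  [K.HasOrthogonalProjection]

theorem inner_sub_norm_mul_norm_sub_starProjection_le (u v : E) :
    ⟪u, v⟫ - ‖u‖ * ‖v - K.starProjection v‖ ≤ ⟪K.starProjection u, K.starProjection v⟫ := by
  have hQu : ‖u - K.starProjection u‖ ≤ ‖u‖ := by
    simpa using Kᗮ.norm_starProjection_apply_le u
  have hQ : ⟪u - K.starProjection u, v - K.starProjection v⟫ ≤ ‖u‖ * ‖v - K.starProjection v‖ :=
    (real_inner_le_norm _ _).trans (mul_le_mul_of_nonneg_right hQu (norm_nonneg _))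
  linarith [K.inner_eq_inner_starProjection_add_inner_sub_starProjection u v]

/-- At `v = 0` the ratio is the junk value `0 / 0 = 0`, and both sides vanish. -/
theorem cos_arccos_norm_sub_starProjection_div_mul (v : E) :
    Real.cos (Real.arccos (‖v - K.starProjection v‖ / ‖v‖)) * ‖v‖ =
      ‖v - K.starProjection v‖ := by
  have hQv : ‖v - K.starProjection v‖ ≤ ‖v‖ := by
    simpa using Kᗮ.norm_starProjection_apply_le v
  have hratio_nonneg : 0 ≤ ‖v - K.starProjection v‖ / ‖v‖ := by positivity
  rw [Real.cos_arccos (by linarith) (div_le_one_of_le₀ hQv (norm_nonneg v))]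
  refine div_mul_cancel_of_imp fun hv => ?_
  rw [norm_eq_zero] at hv
  simp [hv]

end Submodule

theorem stmt4_general {H : Type*} [NormedAddCommGroup H] [InnerProductSpace ℝ H]
    (V : Submodule ℝ H) [CompleteSpace V]
    (v : H)
    (ψ : ℝ) (hψ : ψ = Real.arccos (‖v - (V.orthogonalProjection v : H)‖ / ‖v‖)) :
    ∀ u : H, ⟪u, v⟫ ≥ Real.cos ψ * (‖u‖ * ‖v‖) →
      ⟪(V.orthogonalProjection u : H), (V.orthogonalProjection v : H)⟫ ≥ 0 := by
  intro u hu
  simp only [Submodule.coe_orthogonalProjectionOnto_apply] at hψ ⊢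
  have hcos : Real.cos ψ * (‖u‖ * ‖v‖) = ‖u‖ * ‖v - V.starProjection v‖ := by
    rw [hψ, mul_left_comm, V.cos_arccos_norm_sub_starProjection_div_mul v]
  linarith [V.inner_sub_norm_mul_norm_sub_starProjection_le u v]

/-- If `V ≠ H`, `v ≠ 0` with `∠(v,V⊥) > 0`, then for all `u`,
`⟨u,v⟩ ≥ cos ∠(v,V⊥) ‖u‖ ‖v‖` implies `⟨P u, P v⟩ ≥ 0`. -/
theorem stmt4 {H : Type*} [NormedAddCommGroup H] [InnerProductSpace ℝ H] [CompleteSpace H]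
    (V : Submodule ℝ H) [CompleteSpace V] (hV : V ≠ ⊤)
    (v : H) (hv : v ≠ 0)
    (ψ : ℝ) (hψ : ψ = Real.arccos (‖v - (V.orthogonalProjection v : H)‖ / ‖v‖))
    (hψ0 : 0 < ψ) :
    ∀ u : H, ⟪u, v⟫ ≥ Real.cos ψ * (‖u‖ * ‖v‖) →
      ⟪(V.orthogonalProjection u : H), (V.orthogonalProjection v : H)⟫ ≥ 0 :=
  stmt4_general V v ψ hψ
end

section
/- Let H be a real Hilbert space, V a closed subspace of H with V ≠ H and dim V ≥ 2, and P : H → V the orthogonal projection. Let v ∈ H, v ≠ 0, with ∠(v,V⊥) > 0. Then ∠(v,V⊥) < π/2 if and only if for every u ∈ H: (⟨u, v⟩ ≥ cos∠(v,V⊥) · ‖u‖‖v‖ and Pu ≠ 0) implies ⟨Pu, Pv⟩ > 0. -/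
open scoped RealInnerProductSpace

/-!
Write `P` for the projection onto `V` and `Q = 1 - P`, so that `cos ψ = ‖Q v‖ / ‖v‖` and
`ψ < π/2` exactly when `v ∉ V`. In that case `⟪P u, P v⟫ = ⟪u, v⟫ - ⟪Q u, Q v⟫ ≥
‖Q v‖ (‖u‖ - ‖Q u‖)`, which is positive because `P u ≠ 0` forces `‖Q u‖ < ‖u‖`. If instead
`v ∈ V`, then `cos ψ = 0` and, as `dim V ≥ 2`, some nonzero `w ∈ V` is orthogonal to `v`;
`u = w` violates the condition since `⟪P w, P v⟫ = ⟪w, v⟫ = 0`.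
-/

theorem LinearMap.exists_ne_zero_apply_eq_zero_of_two_le_rank {R M : Type*} [Ring R]
    [StrongRankCondition R] [AddCommGroup M] [Module R M] (f : M →ₗ[R] R)
    (h : 2 ≤ Module.rank R M) :
    ∃ x ≠ 0, f x = 0 := by
  by_contra! hf
  have hinj : Function.Injective f :=
    (injective_iff_map_eq_zero f).2 fun x hx => by_contra fun h0 => hf x h0 hx
  have hle := f.lift_rank_le_of_injective hinj
  rw [Module.rank_self, Cardinal.lift_one, Cardinal.lift_le_one_iff] at hle
  exact absurd (h.trans hle) (by norm_num)

namespace Submodule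

section RCLike

variable {𝕜 E : Type*} [RCLike 𝕜] [NormedAddCommGroup E] [InnerProductSpace 𝕜 E]

theorem exists_mem_ne_zero_inner_eq_zero {K : Submodule 𝕜 E} (hK : 2 ≤ Module.rank 𝕜 K)
    (v : E) : ∃ w ∈ K, w ≠ 0 ∧ inner 𝕜 v w = 0 := by
  obtain ⟨w, hw0, hvw⟩ :=
    ((innerₛₗ 𝕜 v).comp K.subtype).exists_ne_zero_apply_eq_zero_of_two_le_rank hK
  exact ⟨w, w.2, by simpa using hw0, by simpa using hvw⟩

variable (K : Submodule 𝕜 E) [K.HasOrthogonalProjection]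

theorem inner_eq_inner_starProjection_add_inner_sub_starProjection_s6 (u v : E) :
    inner 𝕜 u v = inner 𝕜 (K.starProjection u) (K.starProjection v) +
      inner 𝕜 (u - K.starProjection u) (v - K.starProjection v) := by
  have hleft : inner 𝕜 (K.starProjection u) (v - K.starProjection v) = 0 := by
    rw [inner_eq_zero_symm]
    exact K.starProjection_inner_eq_zero _ _ (K.starProjection_apply_mem u)
  have hright := K.starProjection_inner_eq_zero u _ (K.starProjection_apply_mem v)
  calc inner 𝕜 u v = inner 𝕜 (K.starProjection u + (u - K.starProjection u))
        (K.starProjection v + (v - K.starProjection v)) := by simp only [add_sub_cancel]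
    _ = _ := by rw [inner_add_left, inner_add_right, inner_add_right, hleft, hright]; ring

theorem norm_sub_starProjection_le (u : E) : ‖u - K.starProjection u‖ ≤ ‖u‖ := by
  simpa using Kᗮ.norm_orthogonalProjectionOnto_apply_le u

theorem norm_sub_starProjection_lt {u : E} (hu : K.starProjection u ≠ 0) :
    ‖u - K.starProjection u‖ < ‖u‖ := by
  have hpyth := K.norm_sq_eq_add_norm_sq_starProjection u
  rw [starProjection_orthogonal_val] at hpyth
  have := norm_pos_iff.2 hu
  exact lt_of_pow_lt_pow_left₀ 2 (norm_nonneg u) (by nlinarith)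

theorem sub_starProjection_ne_zero_iff {v : E} : v - K.starProjection v ≠ 0 ↔ v ∉ K := by
  rw [sub_ne_zero, ne_comm, Ne, starProjection_eq_self_iff]

theorem div_norm_sub_starProjection_pos_iff {v : E} :
    0 < ‖v - K.starProjection v‖ / ‖v‖ ↔ v ∉ K := by
  refine ⟨fun h hv => ?_, fun hv => ?_⟩
  · simp [K.starProjection_eq_self_iff.2 hv] at h
  · have hv0 : v ≠ 0 := fun h => hv (h ▸ K.zero_mem)
    have := K.sub_starProjection_ne_zero_iff.2 hv
    positivity

end RCLike

variable {E : Type*} [NormedAddCommGroup E] [InnerProductSpace ℝ E]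
  (K : Submodule ℝ E) [K.HasOrthogonalProjection]

theorem inner_starProjection_pos_of_norm_mul_le_inner {u v : E} (hv : v ∉ K)
    (hu : K.starProjection u ≠ 0) (huv : ‖v - K.starProjection v‖ * ‖u‖ ≤ ⟪u, v⟫) :
    0 < ⟪K.starProjection u, K.starProjection v⟫ := by
  have hQv : 0 < ‖v - K.starProjection v‖ :=
    norm_pos_iff.2 (K.sub_starProjection_ne_zero_iff.2 hv)
  have hCS := real_inner_le_norm (u - K.starProjection u) (v - K.starProjection v)
  calc 0 < ‖v - K.starProjection v‖ * (‖u‖ - ‖u - K.starProjection u‖) :=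
        mul_pos hQv (sub_pos.2 (K.norm_sub_starProjection_lt hu))
    _ ≤ ⟪u, v⟫ - ⟪u - K.starProjection u, v - K.starProjection v⟫ := by
        rw [mul_sub, mul_comm ‖v - _‖ ‖u - _‖]; linarith
    _ = _ := by rw [K.inner_eq_inner_starProjection_add_inner_sub_starProjection_s6 u v]; ring

end Submodule

theorem stmt6_general {H : Type*} [NormedAddCommGroup H] [InnerProductSpace ℝ H]
    (V : Submodule ℝ H) [CompleteSpace V] (hV2 : 2 ≤ Module.rank ℝ V)
    (v : H)
    (ψ : ℝ) (hψ : ψ = Real.arccos (‖v - (V.orthogonalProjectionOnto v : H)‖ / ‖v‖)) :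
    ψ < Real.pi / 2 ↔
      ∀ u : H, ⟪u, v⟫ ≥ Real.cos ψ * (‖u‖ * ‖v‖) →
        (V.orthogonalProjectionOnto u : H) ≠ 0 →
        0 < ⟪(V.orthogonalProjectionOnto u : H), (V.orthogonalProjectionOnto v : H)⟫ := by
  simp only [Submodule.coe_orthogonalProjectionOnto_apply] at hψ ⊢
  have hcos : Real.cos ψ = ‖v - V.starProjection v‖ / ‖v‖ := by
    rw [hψ, Real.cos_arccos ((neg_nonpos.2 zero_le_one).trans (by positivity))
      (div_le_one_of_le₀ (V.norm_sub_starProjection_le v) (norm_nonneg v))]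
  rw [hcos, hψ, Real.arccos_lt_pi_div_two, V.div_norm_sub_starProjection_pos_iff]
  constructor
  · intro hv u huv hu
    have hv0 : ‖v‖ ≠ 0 := norm_ne_zero_iff.2 fun h => hv (h ▸ V.zero_mem)
    refine V.inner_starProjection_pos_of_norm_mul_le_inner hv hu ?_
    rwa [mul_comm ‖u‖, ← mul_assoc, div_mul_cancel₀ _ hv0] at huv
  · intro h hv
    obtain ⟨w, hwV, hw0, hvw⟩ := V.exists_mem_ne_zero_inner_eq_zero hV2 v
    rw [V.starProjection_eq_self_iff.2 hv] at h
    have hPw := V.starProjection_eq_self_iff.2 hwV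
    have := h w (by simp [real_inner_comm, hvw]) (by rwa [hPw])
    rw [hPw, real_inner_comm, hvw] at this
    exact this.false

/-- If `V ≠ H`, `dim V ≥ 2`, `v ≠ 0` with `∠(v,V⊥) > 0`, then
`∠(v,V⊥) < π/2` iff for all `u`: (`⟨u,v⟩ ≥ cos ∠(v,V⊥) ‖u‖ ‖v‖` and `P u ≠ 0`)
implies `⟨P u, P v⟩ > 0`. -/
theorem stmt6 {H : Type*} [NormedAddCommGroup H] [InnerProductSpace ℝ H] [CompleteSpace H]
    (V : Submodule ℝ H) [CompleteSpace V] (hV1 : V ≠ ⊤) (hV2 : 2 ≤ Module.rank ℝ V)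
    (v : H) (hv : v ≠ 0)
    (ψ : ℝ) (hψ : ψ = Real.arccos (‖v - (V.orthogonalProjectionOnto v : H)‖ / ‖v‖))
    (hψ0 : 0 < ψ) :
    ψ < Real.pi / 2 ↔
      ∀ u : H, ⟪u, v⟫ ≥ Real.cos ψ * (‖u‖ * ‖v‖) →
        (V.orthogonalProjectionOnto u : H) ≠ 0 →
        0 < ⟪(V.orthogonalProjectionOnto u : H), (V.orthogonalProjectionOnto v : H)⟫ :=
  stmt6_general V hV2 v ψ hψ
end

section
/- Let H be a real Hilbert space, V a closed subspace with orthogonal projection P : H → V, v ∈ H, φ ∈ [0, π], and θ ∈ [0, π]. Suppose there exists u ∈ H with ⟨u, v⟩ ≥ cos φ · ‖u‖‖v‖, Pu ≠ 0, and ⟨Pu, Pv⟩ = cos θ · ‖Pu‖‖Pv‖. Then C_V(Pv, θ) ⊆ P[C_H(v, φ)], i.e. every w ∈ V with ⟨w, Pv⟩ ≥ cos θ · ‖w‖‖Pv‖ is the orthogonal projection of some element of C_H(v, φ). -/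
open scoped RealInnerProductSpace

/-!
Fix `u` in the cone with `P u ≠ 0`. For `w ∈ V` put `t = ‖w‖ / ‖P u‖` and lift `w` to
`x = w + t • (u - P u)`. Then `P x = w`, and by Pythagoras `‖x‖ = t ‖u‖`, while
`⟪x, v⟫ = ⟪w, P v⟫ + t (⟪u, v⟫ - ⟪P u, P v⟫)`. Since `t ⟪P u, P v⟫ = cos θ ‖w‖ ‖P v‖` exactly,
the cone condition on `w` and on `u` add up to the cone condition on `x`.
-/

namespace Submodule

variable {E : Type*} [NormedAddCommGroup E] [InnerProductSpace ℝ E]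
  (K : Submodule ℝ E) [K.HasOrthogonalProjection]

theorem starProjection_add_smul_sub_starProjection {w : E} (hw : w ∈ K) (t : ℝ) (u : E) :
    K.starProjection (w + t • (u - K.starProjection u)) = w :=
  eq_starProjection_of_mem_orthogonal' hw
    (smul_mem _ t (K.sub_starProjection_mem_orthogonal u)) rfl

theorem norm_add_smul_sub_starProjection {w : E} (hw : w ∈ K) {t : ℝ} (ht : 0 ≤ t) (u : E)
    (hwt : ‖w‖ = t * ‖K.starProjection u‖) :
    ‖w + t • (u - K.starProjection u)‖ = t * ‖u‖ := by
  have hperp : ⟪w, t • (u - K.starProjection u)⟫ = 0 :=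
    K.inner_right_of_mem_orthogonal hw (smul_mem _ t (K.sub_starProjection_mem_orthogonal u))
  have hu := K.norm_sq_eq_add_norm_sq_starProjection u
  rw [starProjection_orthogonal_val] at hu
  refine (mul_self_inj (norm_nonneg _) (by positivity)).mp ?_
  calc ‖w + t • (u - K.starProjection u)‖ * ‖w + t • (u - K.starProjection u)‖
      = ‖w‖ * ‖w‖ + ‖t • (u - K.starProjection u)‖ * ‖t • (u - K.starProjection u)‖ :=
        norm_add_sq_eq_norm_sq_add_norm_sq_real hperp
    _ = t * ‖u‖ * (t * ‖u‖) := by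
        rw [norm_smul, Real.norm_of_nonneg ht, hwt]
        linear_combination t ^ 2 * hu.symm

theorem inner_add_smul_sub_starProjection {w : E} (hw : w ∈ K) (t : ℝ) (u v : E) :
    ⟪w + t • (u - K.starProjection u), v⟫ =
      ⟪w, K.starProjection v⟫ + t * (⟪u, v⟫ - ⟪K.starProjection u, K.starProjection v⟫) := by
  have inner_eq {x : E} (hx : x ∈ K) : ⟪x, v⟫ = ⟪x, K.starProjection v⟫ := by
    rw [← K.inner_starProjection_left_eq_right, K.starProjection_eq_self_iff.mpr hx]
  rw [inner_add_left, real_inner_smul_left, inner_sub_left, inner_eq hw,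
    inner_eq (K.starProjection_apply_mem u)]

theorem exists_starProjection_eq_of_cone {u v w : E} {a b : ℝ}
    (hu : a * (‖u‖ * ‖v‖) ≤ ⟪u, v⟫) (hPu : K.starProjection u ≠ 0)
    (hPuv : ⟪K.starProjection u, K.starProjection v⟫ =
      b * (‖K.starProjection u‖ * ‖K.starProjection v‖))
    (hw : w ∈ K) (hwv : b * (‖w‖ * ‖K.starProjection v‖) ≤ ⟪w, K.starProjection v⟫) :
    ∃ x, a * (‖x‖ * ‖v‖) ≤ ⟪x, v⟫ ∧ K.starProjection x = w := by
  set t := ‖w‖ / ‖K.starProjection u‖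
  have ht : 0 ≤ t := by positivity
  have hwt : ‖w‖ = t * ‖K.starProjection u‖ := (div_mul_cancel₀ _ (norm_ne_zero_iff.mpr hPu)).symm
  refine ⟨w + t • (u - K.starProjection u), ?_, K.starProjection_add_smul_sub_starProjection hw t u⟩
  rw [K.norm_add_smul_sub_starProjection hw ht u hwt, K.inner_add_smul_sub_starProjection hw,
    hPuv]
  rw [hwt] at hwv
  linarith [mul_le_mul_of_nonneg_left hu ht]

end Submodule

theorem stmt7_general {H : Type*} [NormedAddCommGroup H] [InnerProductSpace ℝ H]
    (V : Submodule ℝ H) [CompleteSpace V]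
    (v : H) (φ θ : ℝ)
    (hex : ∃ u : H, ⟪u, v⟫ ≥ Real.cos φ * (‖u‖ * ‖v‖) ∧
      (Submodule.orthogonalProjectionOnto V u : H) ≠ 0 ∧
      ⟪(Submodule.orthogonalProjectionOnto V u : H), (Submodule.orthogonalProjectionOnto V v : H)⟫ =
        Real.cos θ * (‖(Submodule.orthogonalProjectionOnto V u : H)‖ * ‖(Submodule.orthogonalProjectionOnto V v : H)‖)) :
    {w : H | w ∈ V ∧ ⟪w, (Submodule.orthogonalProjectionOnto V v : H)⟫ ≥
        Real.cos θ * (‖w‖ * ‖(Submodule.orthogonalProjectionOnto V v : H)‖)} ⊆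
      (fun u : H => (Submodule.orthogonalProjectionOnto V u : H)) ''
        {u : H | ⟪u, v⟫ ≥ Real.cos φ * (‖u‖ * ‖v‖)} := by
  obtain ⟨u, hu, hPu, hPuv⟩ := hex
  rintro w ⟨hw, hwv⟩
  simp only [Submodule.coe_orthogonalProjectionOnto_apply] at *
  exact V.exists_starProjection_eq_of_cone hu hPu hPuv hw hwv

/-- Suppose some `u` satisfies `⟨u,v⟩ ≥ cos φ ‖u‖ ‖v‖`, `P u ≠ 0` and
`⟨P u, P v⟩ = cos θ ‖P u‖ ‖P v‖`.  Then the cone `C_V(P v, θ)` inside `V` is contained in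
the image under `P` of the cone `C_H(v, φ)`. -/
theorem stmt7 {H : Type*} [NormedAddCommGroup H] [InnerProductSpace ℝ H] [CompleteSpace H]
    (V : Submodule ℝ H) [CompleteSpace V]
    (v : H) (φ θ : ℝ) (hφ0 : 0 ≤ φ) (hφπ : φ ≤ Real.pi) (hθ0 : 0 ≤ θ) (hθπ : θ ≤ Real.pi)
    (hex : ∃ u : H, ⟪u, v⟫ ≥ Real.cos φ * (‖u‖ * ‖v‖) ∧
      (Submodule.orthogonalProjectionOnto V u : H) ≠ 0 ∧
      ⟪(Submodule.orthogonalProjectionOnto V u : H), (Submodule.orthogonalProjectionOnto V v : H)⟫ =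
        Real.cos θ * (‖(Submodule.orthogonalProjectionOnto V u : H)‖ * ‖(Submodule.orthogonalProjectionOnto V v : H)‖)) :
    {w : H | w ∈ V ∧ ⟪w, (Submodule.orthogonalProjectionOnto V v : H)⟫ ≥
        Real.cos θ * (‖w‖ * ‖(Submodule.orthogonalProjectionOnto V v : H)‖)} ⊆
      (fun u : H => (Submodule.orthogonalProjectionOnto V u : H)) ''
        {u : H | ⟪u, v⟫ ≥ Real.cos φ * (‖u‖ * ‖v‖)} :=
  stmt7_general V v φ θ hex
end

section
/- Let H be a real Hilbert space, V a closed subspace with orthogonal projection P : H → V, a, v ∈ H, and φ ∈ [0, π] with 0 < ∠(v,V⊥) and φ < ∠(v,V⊥). Let φ₁ = arccos √((cos²φ − cos²∠(v,V⊥))/(1 − cos²∠(v,V⊥))) when ∠(v,V⊥) ∈ (0, π/2], and φ₁ = φ otherwise. Then the orthogonal projection of the cone C_H(a, v, φ) onto V equals the cone C_V(Pa, Pv, φ₁), i.e. P[C_H(a,v,φ)] = {y ∈ V : ⟨y − Pa, Pv⟩ ≥ cos φ₁ · ‖y − Pa‖‖Pv‖}. -/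
/-!
Write `v = Pv + w` with `w ∈ Vᗮ`, and `u - a = y + z` with `y = P (u - a)`, `z ∈ Vᗮ`. Then
`⟪u - a, v⟫ = ⟪y, Pv⟫ + ⟪z, w⟫` and `‖u - a‖² = ‖y‖² + ‖z‖²`, so Cauchy–Schwarz in `ℝ²` shows that
`y` is the projection of a point of `C_H(a, v, φ)` exactly when `D ‖y‖ ≤ ⟪y, Pv⟫`, where
`D² + ‖w‖² = (cos φ ‖v‖)²`; the point `a + y + (‖y‖ / D) • w` realises the bound. The hypothesis
`φ < ∠(v,V⊥)` says `‖w‖ < cos φ ‖v‖`, i.e. `D > 0`, and `φ₁` is chosen so that `cos φ₁ ‖Pv‖ = D`.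
-/

open scoped RealInnerProductSpace Classical

/-- The angle between a vector `v` and the orthogonal complement of `V`:
`∠(v,V⊥) = arccos (‖v - P v‖ / ‖v‖)` for `v ≠ 0` and `V ≠ H`, with the conventions
`∠(v,V⊥) = π` when `v = 0` or `V = H` (note that it gives `0` when `V = {0}`, `v ≠ 0`). -/

noncomputable def angleToPerp {H : Type*} [NormedAddCommGroup H] [InnerProductSpace ℝ H]
    [CompleteSpace H] (V : Submodule ℝ H) [CompleteSpace V] (v : H) : ℝ :=
  if v = 0 ∨ V = ⊤ then Real.pi
  else Real.arccos (‖v - (V.orthogonalProjectionOnto v : H)‖ / ‖v‖)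

open Real

/-- With `c = cos φ` this is the cone `C_H(a, v, φ)`. -/
def roundCone {H : Type*} [NormedAddCommGroup H] [InnerProductSpace ℝ H] (a v : H) (c : ℝ) :
    Set H :=
  {u | c * (‖u - a‖ * ‖v‖) ≤ ⟪u - a, v⟫}

lemma mul_add_mul_le_mul_of_sq_add_sq {D q b r M s : ℝ} (hM : 0 ≤ M) (hs : 0 ≤ s)
    (hDq : D ^ 2 + q ^ 2 ≤ M ^ 2) (hbr : b ^ 2 + r ^ 2 = s ^ 2) :
    D * b + q * r ≤ M * s := by
  refine le_of_sq_le_sq ?_ (mul_nonneg hM hs)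
  nlinarith [sq_nonneg (D * r - q * b), mul_le_mul_of_nonneg_right hDq (sq_nonneg s)]

namespace Submodule

variable {H : Type*} [NormedAddCommGroup H] [InnerProductSpace ℝ H]
  (K : Submodule ℝ H) [K.HasOrthogonalProjection]

lemma inner_eq_inner_starProjection_add_inner_sub (x v : H) :
    ⟪x, v⟫ = ⟪K.starProjection x, K.starProjection v⟫ +
      ⟪x - K.starProjection x, v - K.starProjection v⟫ := by
  have hx := K.starProjection_inner_eq_zero x _ (K.starProjection_apply_mem v)
  have hv := K.starProjection_inner_eq_zero v _ (K.starProjection_apply_mem x)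
  rw [real_inner_comm] at hv
  simp only [inner_sub_left, inner_sub_right] at hx hv ⊢
  linarith

lemma norm_sq_eq_norm_sq_starProjection_add_norm_sq_sub (x : H) :
    ‖x‖ ^ 2 = ‖K.starProjection x‖ ^ 2 + ‖x - K.starProjection x‖ ^ 2 := by
  simpa using norm_sq_eq_add_norm_sq_starProjection x K

lemma mul_norm_le_inner_starProjection {x v : H} {c D : ℝ} (hc : 0 ≤ c * ‖v‖)
    (hD : D ^ 2 + ‖v - K.starProjection v‖ ^ 2 ≤ (c * ‖v‖) ^ 2)
    (hx : c * (‖x‖ * ‖v‖) ≤ ⟪x, v⟫) :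
    D * ‖K.starProjection x‖ ≤ ⟪K.starProjection x, K.starProjection v⟫ := by
  have hsplit := K.inner_eq_inner_starProjection_add_inner_sub x v
  have hperp := real_inner_le_norm (x - K.starProjection x) (v - K.starProjection v)
  have hbound := mul_add_mul_le_mul_of_sq_add_sq hc (norm_nonneg x) hD
    (K.norm_sq_eq_norm_sq_starProjection_add_norm_sq_sub x).symm
  linarith

lemma starProjection_add_smul_sub_starProjection_s8 {y : H} (hy : y ∈ K) (t : ℝ) (v : H) :
    K.starProjection (y + t • (v - K.starProjection v)) = y :=
  eq_starProjection_of_mem_orthogonal' hy (smul_mem _ t (K.sub_starProjection_mem_orthogonal v)) rfl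

lemma mul_norm_mul_norm_le_inner_add_smul {y v : H} {c D : ℝ} (hy : y ∈ K) (hD : 0 < D)
    (hc : 0 ≤ c * ‖v‖) (hDq : D ^ 2 + ‖v - K.starProjection v‖ ^ 2 = (c * ‖v‖) ^ 2)
    (hyv : D * ‖y‖ ≤ ⟪y, K.starProjection v⟫) :
    c * (‖y + (‖y‖ / D) • (v - K.starProjection v)‖ * ‖v‖) ≤
      ⟪y + (‖y‖ / D) • (v - K.starProjection v), v⟫ := by
  set w := v - K.starProjection v
  set x := y + (‖y‖ / D) • w
  have hPx : K.starProjection x = y := K.starProjection_add_smul_sub_starProjection_s8 hy _ v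
  have hxy : x - y = (‖y‖ / D) • w := add_sub_cancel_left y _
  have hinner : ⟪x, v⟫ = ⟪y, K.starProjection v⟫ + ‖y‖ / D * ‖w‖ ^ 2 := by
    rw [K.inner_eq_inner_starProjection_add_inner_sub x v, hPx, hxy, real_inner_smul_left,
      ← real_inner_self_eq_norm_sq]
  have hnorm : ‖x‖ = ‖y‖ * (c * ‖v‖) / D := by
    refine (sq_eq_sq₀ (norm_nonneg x) (by positivity)).1 ?_
    rw [K.norm_sq_eq_norm_sq_starProjection_add_norm_sq_sub x, hPx, hxy, norm_smul,
      Real.norm_of_nonneg (by positivity)]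
    field_simp
    linear_combination ‖y‖ ^ 2 * hDq
  have hcone : c * (‖y‖ * (c * ‖v‖) / D * ‖v‖) = D * ‖y‖ + ‖y‖ / D * ‖w‖ ^ 2 := by
    field_simp
    linear_combination (-‖y‖) * hDq
  rw [hinner, hnorm, hcone]
  linarith

theorem image_starProjection_roundCone {a v : H} {c c₁ : ℝ} (hc : 0 ≤ c * ‖v‖)
    (hc₁ : 0 < c₁ * ‖K.starProjection v‖)
    (h : (c₁ * ‖K.starProjection v‖) ^ 2 + ‖v - K.starProjection v‖ ^ 2 = (c * ‖v‖) ^ 2) :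
    K.starProjection '' roundCone a v c =
      (K : Set H) ∩ roundCone (K.starProjection a) (K.starProjection v) c₁ := by
  ext y
  constructor
  · rintro ⟨u, hu, rfl⟩
    refine ⟨K.starProjection_apply_mem u, ?_⟩
    have := K.mul_norm_le_inner_starProjection hc h.le hu
    simp only [roundCone, Set.mem_ofPred_eq, ← map_sub]
    linarith
  · rintro ⟨hy, hyc⟩
    set x := (y - K.starProjection a) + (‖y - K.starProjection a‖ / (c₁ * ‖K.starProjection v‖)) •
      (v - K.starProjection v)
    have hya : y - K.starProjection a ∈ K := K.sub_mem hy (K.starProjection_apply_mem a)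
    have hyv : c₁ * ‖K.starProjection v‖ * ‖y - K.starProjection a‖ ≤
        ⟪y - K.starProjection a, K.starProjection v⟫ := by
      simp only [roundCone, Set.mem_ofPred_eq] at hyc
      linarith
    refine ⟨a + x, ?_, ?_⟩
    · simpa [roundCone] using K.mul_norm_mul_norm_le_inner_add_smul hya hc₁ hc h hyv
    · rw [map_add, K.starProjection_add_smul_sub_starProjection_s8 hya, add_sub_cancel]

theorem image_starProjection_roundCone_zero (a : H) (c c₁ : ℝ) :
    K.starProjection '' roundCone a 0 c = (K : Set H) ∩ roundCone (K.starProjection a) 0 c₁ := by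
  ext y
  simp only [roundCone, norm_zero, mul_zero, inner_zero_right, le_refl, Set.ofPred_true,
    Set.image_univ, Set.inter_univ]
  exact ⟨by rintro ⟨x, rfl⟩; exact K.starProjection_apply_mem x,
    fun hy => ⟨y, K.starProjection_eq_self_iff.2 hy⟩⟩

end Submodule

lemma cos_arccos_sqrt_mul_eq {n p q c : ℝ} (hn : n ≠ 0) (hp : 0 < p)
    (hpq : p ^ 2 + q ^ 2 = n ^ 2) (hc : c ^ 2 ≤ 1) :
    cos (arccos √((c ^ 2 - (q / n) ^ 2) / (1 - (q / n) ^ 2))) * p = √((c * n) ^ 2 - q ^ 2) := by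
  have harg : (c ^ 2 - (q / n) ^ 2) / (1 - (q / n) ^ 2) = ((c * n) ^ 2 - q ^ 2) / p ^ 2 := by
    have : 1 - (q / n) ^ 2 = p ^ 2 / n ^ 2 := by
      field_simp
      linarith
    rw [this]
    field_simp
  have hle : √((c * n) ^ 2 - q ^ 2) ≤ p := by
    rw [sqrt_le_left hp.le]
    nlinarith [sq_nonneg n]
  have hnonneg : 0 ≤ √((c * n) ^ 2 - q ^ 2) / p := by positivity
  rw [harg, sqrt_div' _ (sq_nonneg p), sqrt_sq hp.le,
    cos_arccos (by linarith) ((div_le_one hp).2 hle), div_mul_cancel₀ _ hp.ne']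

section AngleToPerp

variable {H : Type*} [NormedAddCommGroup H] [InnerProductSpace ℝ H] [CompleteSpace H]
  {V : Submodule ℝ H} [CompleteSpace V] {v : H}

lemma angleToPerp_eq_arccos (hv : v ≠ 0) (hV : V ≠ ⊤) :
    angleToPerp V v = arccos (‖v - V.starProjection v‖ / ‖v‖) := by
  rw [angleToPerp, if_neg (not_or.2 ⟨hv, hV⟩)]
  rfl

lemma cos_angleToPerp (hv : v ≠ 0) (hV : V ≠ ⊤) :
    cos (angleToPerp V v) = ‖v - V.starProjection v‖ / ‖v‖ := by
  have hq : ‖v - V.starProjection v‖ ≤ ‖v‖ := by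
    simpa using Vᗮ.norm_starProjection_apply_le v
  have hk : 0 ≤ ‖v - V.starProjection v‖ / ‖v‖ := by positivity
  rw [angleToPerp_eq_arccos hv hV, cos_arccos (by linarith) (div_le_one_of_le₀ hq (norm_nonneg v))]

lemma angleToPerp_le_pi_div_two (hv : v ≠ 0) (hV : V ≠ ⊤) : angleToPerp V v ≤ π / 2 := by
  rw [angleToPerp_eq_arccos hv hV, arccos_le_pi_div_two]
  positivity

lemma norm_sub_starProjection_lt_cos_mul_norm {φ : ℝ} (hv : v ≠ 0) (hV : V ≠ ⊤) (hφ : 0 ≤ φ)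
    (hφψ : φ < angleToPerp V v) : ‖v - V.starProjection v‖ < cos φ * ‖v‖ := by
  have hψπ : angleToPerp V v ≤ π := by
    rw [angleToPerp_eq_arccos hv hV]
    exact arccos_le_pi _
  have := cos_lt_cos_of_nonneg_of_le_pi hφ hψπ hφψ
  rwa [cos_angleToPerp hv hV, div_lt_iff₀ (norm_pos_iff.2 hv)] at this

lemma starProjection_ne_zero_of_angleToPerp_pos (hv : v ≠ 0) (hψ : 0 < angleToPerp V v) :
    V.starProjection v ≠ 0 := by
  by_cases hV : V = ⊤
  · subst hV
    simpa [Submodule.starProjection_top] using hv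
  · intro h
    rw [angleToPerp_eq_arccos hv hV, h, sub_zero, div_self (norm_ne_zero_iff.2 hv),
      arccos_one] at hψ
    exact hψ.false

end AngleToPerp

theorem stmt8_general {H : Type*} [NormedAddCommGroup H] [InnerProductSpace ℝ H] [CompleteSpace H]
    (V : Submodule ℝ H) [CompleteSpace V]
    (a v : H) (φ : ℝ) (hφ0 : 0 ≤ φ)
    (hψ0 : 0 < angleToPerp V v) (hφψ : φ < angleToPerp V v)
    (φ₁ : ℝ)
    (hφ₁ : φ₁ = if 0 < angleToPerp V v ∧ angleToPerp V v ≤ Real.pi / 2 then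
        Real.arccos (Real.sqrt ((Real.cos φ ^ 2 - Real.cos (angleToPerp V v) ^ 2) /
          (1 - Real.cos (angleToPerp V v) ^ 2)))
      else φ) :
    (fun u : H => (V.orthogonalProjectionOnto u : H)) ''
        {u : H | ⟪u - a, v⟫ ≥ Real.cos φ * (‖u - a‖ * ‖v‖)} =
      {y : H | y ∈ V ∧ ⟪y - (V.orthogonalProjectionOnto a : H), (V.orthogonalProjectionOnto v : H)⟫ ≥
        Real.cos φ₁ * (‖y - (V.orthogonalProjectionOnto a : H)‖ *
          ‖(V.orthogonalProjectionOnto v : H)‖)} := by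
  change V.starProjection '' roundCone a v (cos φ) =
    (V : Set H) ∩ roundCone (V.starProjection a) (V.starProjection v) (cos φ₁)
  by_cases hdeg : v = 0 ∨ V = ⊤
  · have hψ : angleToPerp V v = π := if_pos hdeg
    rw [hφ₁, if_neg (by rw [hψ]; intro h; linarith [pi_pos, h.2])]
    rcases hdeg with rfl | rfl
    · simpa using V.image_starProjection_roundCone_zero a (cos φ) (cos φ)
    · simp [Submodule.starProjection_top]
  obtain ⟨hv, hV⟩ := not_or.1 hdeg
  have hq := norm_sub_starProjection_lt_cos_mul_norm hv hV hφ0 hφψ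
  have hq0 := norm_nonneg (v - V.starProjection v)
  have hc₁ := cos_arccos_sqrt_mul_eq (norm_ne_zero_iff.2 hv)
    (norm_pos_iff.2 (starProjection_ne_zero_of_angleToPerp_pos hv hψ0))
    (V.norm_sq_eq_norm_sq_starProjection_add_norm_sq_sub v).symm (cos_sq_le_one φ)
  rw [hφ₁, if_pos ⟨hψ0, angleToPerp_le_pi_div_two hv hV⟩, cos_angleToPerp hv hV]
  refine V.image_starProjection_roundCone (by linarith) ?_ ?_
  · rw [hc₁, sqrt_pos]
    nlinarith
  · rw [hc₁, sq_sqrt (by nlinarith)]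
    ring

/-- If `0 ≤ φ ≤ π`, `0 < ∠(v,V⊥)` and `φ < ∠(v,V⊥)`, and `φ₁` is
`arccos √((cos²φ - cos²∠(v,V⊥)) / (1 - cos²∠(v,V⊥)))` when `∠(v,V⊥) ∈ (0, π/2]` and `φ`
otherwise, then `P[C_H(a,v,φ)] = C_V(P a, P v, φ₁)`. -/
theorem stmt8 {H : Type*} [NormedAddCommGroup H] [InnerProductSpace ℝ H] [CompleteSpace H]
    (V : Submodule ℝ H) [CompleteSpace V]
    (a v : H) (φ : ℝ) (hφ0 : 0 ≤ φ) (hφπ : φ ≤ Real.pi)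
    (hψ0 : 0 < angleToPerp V v) (hφψ : φ < angleToPerp V v)
    (φ₁ : ℝ)
    (hφ₁ : φ₁ = if 0 < angleToPerp V v ∧ angleToPerp V v ≤ Real.pi / 2 then
        Real.arccos (Real.sqrt ((Real.cos φ ^ 2 - Real.cos (angleToPerp V v) ^ 2) /
          (1 - Real.cos (angleToPerp V v) ^ 2)))
      else φ) :
    (fun u : H => (V.orthogonalProjectionOnto u : H)) ''
        {u : H | ⟪u - a, v⟫ ≥ Real.cos φ * (‖u - a‖ * ‖v‖)} =
      {y : H | y ∈ V ∧ ⟪y - (V.orthogonalProjectionOnto a : H), (V.orthogonalProjectionOnto v : H)⟫ ≥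
        Real.cos φ₁ * (‖y - (V.orthogonalProjectionOnto a : H)‖ *
          ‖(V.orthogonalProjectionOnto v : H)‖)} :=
  stmt8_general V a v φ hφ0 hψ0 hφψ φ₁ hφ₁
end

section
/- Let H be a real Hilbert space, V a closed subspace with orthogonal projection P : H → V, a, v ∈ H, and φ ∈ (0, π/2) with φ = ∠(v,V⊥). Then P[C_H(a, v, φ)] = C°_V(Pa, Pv, π/2), i.e. the orthogonal projection of the cone C_H(a, v, φ) onto V is the union of {Pa} with the open half-space {y ∈ V : ⟨y − Pa, Pv⟩ > 0}. -/
open scoped RealInnerProductSpace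

/-!
Write `w = v - P v` for the component of `v` in `V⊥`, so that `cos φ ‖v‖ = ‖w‖ > 0` and the cone
condition for `x = u - a` reads `‖w‖ ‖x‖ ≤ ⟪P x, P v⟫ + ⟪x - P x, w⟫`. By Cauchy–Schwarz the last
term is at most `‖w‖ ‖x - P x‖ ≤ ‖w‖ ‖x‖`, so `⟪P x, P v⟫ ≥ 0`, with equality only if
`‖x - P x‖ = ‖x‖`, i.e. `P x = 0`. Conversely, a point `y ∈ V` with `⟪y, P v⟫ > 0` is lifted into
the cone by moving it far enough along `w`.
-/

namespace Submodule

variable {E : Type*} [NormedAddCommGroup E] [InnerProductSpace ℝ E]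
  (K : Submodule ℝ E) [K.HasOrthogonalProjection]

theorem real_inner_eq_inner_starProjection_add_inner_starProjection_orthogonal (x v : E) :
    ⟪x, v⟫ = ⟪K.starProjection x, K.starProjection v⟫ +
      ⟪Kᗮ.starProjection x, Kᗮ.starProjection v⟫ := by
  conv_lhs => rw [← K.starProjection_add_starProjection_orthogonal x,
    ← K.starProjection_add_starProjection_orthogonal v]
  have h₁ : ⟪K.starProjection x, Kᗮ.starProjection v⟫ = 0 :=
    inner_right_of_mem_orthogonal (K.starProjection_apply_mem x) (Kᗮ.starProjection_apply_mem v)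
  have h₂ : ⟪Kᗮ.starProjection x, K.starProjection v⟫ = 0 :=
    inner_left_of_mem_orthogonal (K.starProjection_apply_mem v) (Kᗮ.starProjection_apply_mem x)
  simp only [inner_add_left, inner_add_right, h₁, h₂]
  ring

theorem starProjection_eq_zero_or_inner_pos_of_mem_cone {x v : E}
    (hw : Kᗮ.starProjection v ≠ 0) (hx : ‖Kᗮ.starProjection v‖ * ‖x‖ ≤ ⟪x, v⟫) :
    K.starProjection x = 0 ∨ 0 < ⟪K.starProjection x, K.starProjection v⟫ := by
  refine (le_or_gt _ 0).imp_left fun hle ↦ ?_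
  have hw₀ : 0 < ‖Kᗮ.starProjection v‖ := norm_pos_iff.mpr hw
  have hCS := real_inner_le_norm (Kᗮ.starProjection x) (Kᗮ.starProjection v)
  rw [K.real_inner_eq_inner_starProjection_add_inner_starProjection_orthogonal] at hx
  have hnorm : ‖x‖ ≤ ‖Kᗮ.starProjection x‖ := le_of_mul_le_mul_left (by linarith) hw₀
  have heq : ‖Kᗮ.starProjection x‖ = ‖x‖ := le_antisymm (Kᗮ.norm_starProjection_apply_le x) hnorm
  have hpyth := K.norm_sq_eq_add_norm_sq_starProjection x
  rwa [heq, right_eq_add, sq_eq_zero_iff, norm_eq_zero] at hpyth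

theorem exists_mem_cone_starProjection_eq {y v : E} (hy : y ∈ K)
    (hpos : 0 < ⟪y, K.starProjection v⟫) :
    ∃ x, K.starProjection x = y ∧ ‖Kᗮ.starProjection v‖ * ‖x‖ ≤ ⟪x, v⟫ := by
  set w := Kᗮ.starProjection v
  set c := ⟪y, K.starProjection v⟫
  -- `(c + t ‖w‖²)² - ‖w‖² ‖y + t w‖² = c² + ‖w‖² (2 c t - ‖y‖²)`, which this choice makes `c²`.
  set t := ‖y‖ ^ 2 / (2 * c)
  have ht : 0 ≤ t := by positivity
  have hKw : K.starProjection w = 0 :=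
    K.starProjection_apply_eq_zero_iff.mpr (Kᗮ.starProjection_apply_mem v)
  have hKx : K.starProjection (y + t • w) = y := by
    rw [map_add, map_smul, hKw, smul_zero, add_zero, K.starProjection_eq_self_iff.mpr hy]
  have hKperpx : Kᗮ.starProjection (y + t • w) = t • w := by
    rw [starProjection_orthogonal_val, hKx, add_sub_cancel_left]
  have hinner : ⟪y + t • w, v⟫ = c + t * ‖w‖ ^ 2 := by
    rw [K.real_inner_eq_inner_starProjection_add_inner_starProjection_orthogonal, hKx, hKperpx,
      real_inner_smul_left, real_inner_self_eq_norm_sq]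
  have hnorm : ‖y + t • w‖ ^ 2 = ‖y‖ ^ 2 + t ^ 2 * ‖w‖ ^ 2 := by
    rw [K.norm_sq_eq_add_norm_sq_starProjection, hKx, hKperpx, norm_smul, Real.norm_of_nonneg ht,
      mul_pow]
  refine ⟨y + t • w, hKx, ?_⟩
  rw [hinner]
  refine abs_le_of_sq_le_sq' ?_ (by positivity) |>.2
  have h2ct : 2 * c * t = ‖y‖ ^ 2 := by simp only [t]; field_simp
  calc (‖w‖ * ‖y + t • w‖) ^ 2 = (c + t * ‖w‖ ^ 2) ^ 2 - c ^ 2 := by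
        rw [mul_pow, hnorm, ← h2ct]; ring
    _ ≤ (c + t * ‖w‖ ^ 2) ^ 2 := sub_le_self _ (sq_nonneg c)

theorem starProjection_image_cone {v : E} (hw : Kᗮ.starProjection v ≠ 0) (a : E) :
    K.starProjection '' {u | ‖Kᗮ.starProjection v‖ * ‖u - a‖ ≤ ⟪u - a, v⟫} =
      {K.starProjection a} ∪ {y | y ∈ K ∧ 0 < ⟪y - K.starProjection a, K.starProjection v⟫} := by
  ext y
  constructor
  · rintro ⟨u, hu, rfl⟩
    rcases K.starProjection_eq_zero_or_inner_pos_of_mem_cone hw hu with h | h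
    · exact .inl (sub_eq_zero.mp (by rwa [map_sub] at h))
    · exact .inr ⟨K.starProjection_apply_mem u, by rwa [map_sub] at h⟩
  · rintro (rfl | ⟨hy, hpos⟩)
    · exact ⟨a, by simp, rfl⟩
    · obtain ⟨x, hx, hcone⟩ := K.exists_mem_cone_starProjection_eq
        (K.sub_mem hy (K.starProjection_apply_mem a)) hpos
      refine ⟨x + a, by simpa using hcone, ?_⟩
      rw [map_add, hx, sub_add_cancel]

theorem cos_arccos_norm_starProjection_orthogonal_div_mul (v : E) :
    Real.cos (Real.arccos (‖Kᗮ.starProjection v‖ / ‖v‖)) * ‖v‖ = ‖Kᗮ.starProjection v‖ := by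
  rcases eq_or_ne v 0 with rfl | hv
  · simp
  have hnonneg := div_nonneg (norm_nonneg (Kᗮ.starProjection v)) (norm_nonneg v)
  rw [Real.cos_arccos (by linarith)
      (div_le_one_of_le₀ (Kᗮ.norm_starProjection_apply_le v) (norm_nonneg v)),
    div_mul_cancel₀ _ (norm_ne_zero_iff.mpr hv)]

end Submodule

theorem stmt10_general {H : Type*} [NormedAddCommGroup H] [InnerProductSpace ℝ H]
    (V : Submodule ℝ H) [CompleteSpace V]
    (a v : H) (φ : ℝ) (hφ2 : φ < Real.pi / 2)
    (hφψ : φ = Real.arccos (‖v - (V.orthogonalProjection v : H)‖ / ‖v‖)) :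
    (fun u : H => (V.orthogonalProjection u : H)) ''
        {u : H | ⟪u - a, v⟫ ≥ Real.cos φ * (‖u - a‖ * ‖v‖)} =
      {(V.orthogonalProjection a : H)} ∪
        {y : H | y ∈ V ∧
          0 < ⟪y - (V.orthogonalProjection a : H), (V.orthogonalProjection v : H)⟫} := by
  have hφ : φ = Real.arccos (‖Vᗮ.starProjection v‖ / ‖v‖) := by
    rwa [Submodule.starProjection_orthogonal_val]
  have hcos := V.cos_arccos_norm_starProjection_orthogonal_div_mul v
  rw [← hφ] at hcos
  have hw : Vᗮ.starProjection v ≠ 0 := by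
    intro hw₀
    rw [hφ, Real.arccos_lt_pi_div_two, hw₀, norm_zero, zero_div] at hφ2
    exact hφ2.false
  have hcone : {u : H | ⟪u - a, v⟫ ≥ Real.cos φ * (‖u - a‖ * ‖v‖)} =
      {u | ‖Vᗮ.starProjection v‖ * ‖u - a‖ ≤ ⟪u - a, v⟫} := by
    ext u
    rw [Set.mem_ofPred_eq, Set.mem_ofPred_eq, ← hcos, ge_iff_le, mul_right_comm, mul_assoc]
  rw [hcone]
  exact V.starProjection_image_cone hw a

/-- If `φ ∈ (0, π/2)` and `φ = ∠(v,V⊥) = arccos (‖v - P v‖ / ‖v‖)`, then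
`P[C_H(a,v,φ)]` is the union of `{P a}` with the open half-space
`{y ∈ V : ⟨y - P a, P v⟩ > 0}`. -/
theorem stmt10 {H : Type*} [NormedAddCommGroup H] [InnerProductSpace ℝ H] [CompleteSpace H]
    (V : Submodule ℝ H) [CompleteSpace V]
    (a v : H) (φ : ℝ) (hφ0 : 0 < φ) (hφ2 : φ < Real.pi / 2)
    (hφψ : φ = Real.arccos (‖v - (V.orthogonalProjection v : H)‖ / ‖v‖)) :
    (fun u : H => (V.orthogonalProjection u : H)) ''
        {u : H | ⟪u - a, v⟫ ≥ Real.cos φ * (‖u - a‖ * ‖v‖)} =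
      {(V.orthogonalProjection a : H)} ∪
        {y : H | y ∈ V ∧
          0 < ⟪y - (V.orthogonalProjection a : H), (V.orthogonalProjection v : H)⟫} :=
  stmt10_general V a v φ hφ2 hφψ
end

section
/- Let α ∈ (0, 1) and t ∈ ℝ with 1 − α² ≤ t ≤ 1. Then for every u ∈ L²((0,1)) (real-valued, square integrable with respect to Lebesgue measure) satisfying ∫₀¹ u ≥ α·√(∫₀¹ u²), one has ∫₀ᵗ u ≥ √(t − 1 + α²)·√(∫₀ᵗ u²); in particular ∫₀ᵗ u ≥ 0. -/
open MeasureTheory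

/-! Split `(0,1)` at `t`. Cauchy–Schwarz on `[t,1)` bounds the tail `∫ₜ¹ u` by
`√(1-t) ‖u‖_{L²(t,1)}`, and Cauchy–Schwarz in `ℝ²`, with `(t-1+α²) + (1-t) = α²`, gives
`√(t-1+α²) ‖u‖_{L²(0,t)} + √(1-t) ‖u‖_{L²(t,1)} ≤ α ‖u‖_{L²(0,1)} ≤ ∫₀¹ u`.
Subtracting the tail bound leaves the claim. -/

theorem integral_le_sqrt_measureReal_univ_mul_sqrt_integral_sq {α : Type*} [MeasurableSpace α]
    {μ : Measure α} [IsFiniteMeasure μ] {u : α → ℝ} (hu : MemLp u 2 μ) :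
    ∫ x, u x ∂μ ≤ √(μ.real Set.univ) * √(∫ x, u x ^ 2 ∂μ) := by
  have habs : MemLp (fun x => |u x|) (ENNReal.ofReal 2) μ := by
    rw [ENNReal.ofReal_ofNat]
    exact hu.abs
  have holder := integral_mul_le_Lp_mul_Lq_of_nonneg Real.HolderConjugate.two_two
    (Filter.Eventually.of_forall fun x => abs_nonneg (u x))
    (Filter.Eventually.of_forall fun _ => zero_le_one) habs (memLp_const 1)
  simp only [mul_one, Real.one_rpow, integral_const, smul_eq_mul, ← Real.sqrt_eq_rpow] at holder
  calc ∫ x, u x ∂μ ≤ ∫ x, |u x| ∂μ :=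
        integral_mono (hu.integrable one_le_two) (hu.integrable one_le_two).abs
          fun x => le_abs_self (u x)
    _ ≤ _ := holder
    _ = _ := by simp [mul_comm, sq_abs]

theorem Real.sqrt_mul_sqrt_add_sqrt_mul_sqrt_le {a b c d : ℝ} (ha : 0 ≤ a) (hb : 0 ≤ b)
    (hc : 0 ≤ c) (hd : 0 ≤ d) :
    √a * √c + √b * √d ≤ √(a + b) * √(c + d) := by
  rw [← Real.sqrt_mul (add_nonneg ha hb)]
  refine Real.le_sqrt_of_sq_le ?_
  nlinarith [sq_nonneg (√a * √d - √b * √c), Real.sq_sqrt ha, Real.sq_sqrt hb,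
    Real.sq_sqrt hc, Real.sq_sqrt hd]

theorem setIntegral_Ioo_eq_Ioo_add_Ico {f : ℝ → ℝ} {a b c : ℝ} (hab : a < b) (hbc : b ≤ c)
    (hf : IntegrableOn f (Set.Ioo a c)) :
    ∫ x in Set.Ioo a c, f x = (∫ x in Set.Ioo a b, f x) + ∫ x in Set.Ico b c, f x := by
  rw [← Set.Ioo_union_Ico_eq_Ioo hab hbc] at hf ⊢
  exact setIntegral_union (Set.Ico_disjoint_Ico_same.mono_left Set.Ioo_subset_Ico_self)
    measurableSet_Ico (hf.mono_set Set.subset_union_left) (hf.mono_set Set.subset_union_right)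

/-- Let `α ∈ (0,1)` and `1 - α² ≤ t ≤ 1`.  For every real-valued
`u ∈ L²((0,1))` with `∫₀¹ u ≥ α √(∫₀¹ u²)` one has
`∫₀ᵗ u ≥ √(t - 1 + α²) √(∫₀ᵗ u²)`; in particular `∫₀ᵗ u ≥ 0`. -/
theorem stmt17 (α t : ℝ) (hα0 : 0 < α) (hα1 : α < 1)
    (ht1 : 1 - α ^ 2 ≤ t) (ht2 : t ≤ 1)
    (u : ℝ → ℝ) (hu : MemLp u 2 (volume.restrict (Set.Ioo (0 : ℝ) 1)))
    (h : (∫ x in Set.Ioo (0 : ℝ) 1, u x) ≥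
      α * Real.sqrt (∫ x in Set.Ioo (0 : ℝ) 1, (u x) ^ 2)) :
    (∫ x in Set.Ioo (0 : ℝ) t, u x) ≥
        Real.sqrt (t - 1 + α ^ 2) * Real.sqrt (∫ x in Set.Ioo (0 : ℝ) t, (u x) ^ 2) ∧
      0 ≤ ∫ x in Set.Ioo (0 : ℝ) t, u x := by
  have ht0 : 0 < t := by nlinarith
  rw [setIntegral_Ioo_eq_Ioo_add_Ico ht0 ht2 (hu.integrable one_le_two),
    setIntegral_Ioo_eq_Ioo_add_Ico ht0 ht2 hu.integrable_sq] at h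
  have tail_le : ∫ x in Set.Ico t 1, u x ≤ √(1 - t) * √(∫ x in Set.Ico t 1, u x ^ 2) := by
    have := integral_le_sqrt_measureReal_univ_mul_sqrt_integral_sq
      (hu.mono_measure (Measure.restrict_mono (Set.Ico_subset_Ioo_left ht0) le_rfl))
    simpa [Real.volume_real_Ico_of_le ht2] using this
  have split_le : √(t - 1 + α ^ 2) * √(∫ x in Set.Ioo 0 t, u x ^ 2)
      + √(1 - t) * √(∫ x in Set.Ico t 1, u x ^ 2)
      ≤ α * √((∫ x in Set.Ioo 0 t, u x ^ 2) + ∫ x in Set.Ico t 1, u x ^ 2) := by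
    calc _ ≤ √((t - 1 + α ^ 2) + (1 - t))
          * √((∫ x in Set.Ioo 0 t, u x ^ 2) + ∫ x in Set.Ico t 1, u x ^ 2) :=
          Real.sqrt_mul_sqrt_add_sqrt_mul_sqrt_le (by linarith) (by linarith)
            (integral_nonneg fun x => sq_nonneg (u x)) (integral_nonneg fun x => sq_nonneg (u x))
      _ = _ := by rw [show t - 1 + α ^ 2 + (1 - t) = α ^ 2 by ring, Real.sqrt_sq hα0.le]
  have main : √(t - 1 + α ^ 2) * √(∫ x in Set.Ioo 0 t, u x ^ 2) ≤ ∫ x in Set.Ioo 0 t, u x := by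
    linarith
  exact ⟨main, le_trans (by positivity) main⟩
end

section
/- Let α ∈ (0, 1) and t ∈ ℝ with 0 < t < 1 − α². Then there exists u ∈ L²((0,1)) (real-valued, square integrable with respect to Lebesgue measure) such that ∫₀¹ u ≥ α·√(∫₀¹ u²) and ∫₀ᵗ u < 0. Combined with the case t ≥ 1 − α², this shows that t = 1 − α² is the smallest t > 0 such that the condition ∫₀¹ u ≥ α·√(∫₀¹ u²) forces ∫₀ᵗ u ≥ 0 for all u ∈ L²((0,1)). -/
/-! Take `u = -ε` on `(0, t)` and `u = 1` on `[t, 1)`. For `ε = 0` the ratio `∫₀¹ u / ‖u‖` is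
`√(1 - t) > α`, so it stays `≥ α` for small `ε > 0` while `∫₀ᵗ u = -ε t < 0`; the explicit choice
`ε = (1 - t - α²) / 3` is small enough. -/

open MeasureTheory Set

section PiecewiseConst

variable {X E : Type*} [MeasurableSpace X] {μ : Measure X} [IsFiniteMeasure μ] {s : Set X}
  [DecidablePred (· ∈ s)] [NormedAddCommGroup E]

theorem memLp_piecewise_const (hs : MeasurableSet s) (a b : E) (p : ENNReal) :
    MemLp (s.piecewise (fun _ => a) (fun _ => b)) p μ :=
  (memLp_const a).piecewise hs (memLp_const b)

theorem integral_piecewise_const [NormedSpace ℝ E] [CompleteSpace E] (hs : MeasurableSet s)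
    (a b : E) :
    ∫ x, s.piecewise (fun _ => a) (fun _ => b) x ∂μ = μ.real s • a + μ.real sᶜ • b := by
  rw [integral_piecewise hs integrableOn_const integrableOn_const,
    setIntegral_const, setIntegral_const]

end PiecewiseConst

theorem setIntegral_Ioo_piecewise_Iio {E : Type*} [NormedAddCommGroup E] [NormedSpace ℝ E]
    [CompleteSpace E] {c t d : ℝ} (hct : c < t) (htd : t ≤ d) (a b : E) :
    ∫ x in Ioo c d, (Iio t).piecewise (fun _ => a) (fun _ => b) x = (t - c) • a + (d - t) • b := by
  have hlow : Iio t ∩ Ioo c d = Ioo c t := by ext; simp; grind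
  have hhigh : (Iio t)ᶜ ∩ Ioo c d = Ico t d := by ext; simp; grind
  rw [integral_piecewise_const measurableSet_Iio, measureReal_restrict_apply measurableSet_Iio,
    measureReal_restrict_apply measurableSet_Iio.compl, hlow, hhigh,
    Real.volume_real_Ioo_of_le hct.le, Real.volume_real_Ico_of_le htd]

theorem mul_sqrt_le_of_sq_mul_le {a x y : ℝ} (hy : 0 ≤ y) (h : a ^ 2 * x ≤ y ^ 2) :
    a * √x ≤ y :=
  calc a * √x ≤ |a| * √x := mul_le_mul_of_nonneg_right (le_abs_self a) (Real.sqrt_nonneg x)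
    _ = √(a ^ 2 * x) := by rw [Real.sqrt_mul (sq_nonneg a), Real.sqrt_sq_eq_abs]
    _ ≤ √(y ^ 2) := Real.sqrt_le_sqrt h
    _ = y := Real.sqrt_sq hy

theorem exists_pos_mul_sqrt_le {α t : ℝ} (ht0 : 0 < t) (ht1 : t < 1 - α ^ 2) :
    ∃ ε > 0, α * √(t * ε ^ 2 + (1 - t)) ≤ t * -ε + (1 - t) := by
  have hδ : 0 < 1 - t - α ^ 2 := by linarith
  have h1t : 0 < 1 - t := by nlinarith
  have hfac : 0 < 1 - 2 * t / 3 - (1 - t - α ^ 2) * t / 9 := by nlinarith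
  refine ⟨(1 - t - α ^ 2) / 3, by positivity, mul_sqrt_le_of_sq_mul_le (by nlinarith) ?_⟩
  -- with `δ = 1 - t - α²`, the goal's difference of sides is
  -- `(1 - t) (δ - 2 ε t - ε² t) + ε² t (1 - α²)`, and `δ - 2 ε t - ε² t = δ · hfac` for `ε = δ / 3`
  nlinarith [mul_pos (mul_pos h1t hδ) hfac, mul_pos (pow_pos hδ 2) ht0,
    mul_nonneg (mul_nonneg (pow_pos hδ 2).le ht0.le) (sq_nonneg α)]

theorem stmt18_general (α t : ℝ)
    (ht0 : 0 < t) (ht1 : t < 1 - α ^ 2) :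
    ∃ u : ℝ → ℝ, MemLp u 2 (volume.restrict (Set.Ioo (0 : ℝ) 1)) ∧
      (∫ x in Set.Ioo (0 : ℝ) 1, u x) ≥
        α * Real.sqrt (∫ x in Set.Ioo (0 : ℝ) 1, (u x) ^ 2) ∧
      (∫ x in Set.Ioo (0 : ℝ) t, u x) < 0 := by
  obtain ⟨ε, hε, hineq⟩ := exists_pos_mul_sqrt_le ht0 ht1
  have ht_le_one : t ≤ 1 := by nlinarith
  set u := (Iio t).piecewise (fun _ => -ε) (fun _ => (1 : ℝ))
  have hu_sq : ∀ x, u x ^ 2 = (Iio t).piecewise (fun _ => ε ^ 2) (fun _ => 1) x := fun x => by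
    simp only [u, Set.piecewise]; split_ifs <;> ring
  refine ⟨u, memLp_piecewise_const measurableSet_Iio _ _ _, ?_, ?_⟩
  · simp_rw [hu_sq]
    rw [setIntegral_Ioo_piecewise_Iio ht0 ht_le_one, setIntegral_Ioo_piecewise_Iio ht0 ht_le_one]
    simpa using hineq
  · rw [setIntegral_Ioo_piecewise_Iio ht0 le_rfl]
    simpa using mul_pos ht0 hε

/-- Let `α ∈ (0,1)` and `0 < t < 1 - α²`.  Then there exists a
real-valued `u ∈ L²((0,1))` with `∫₀¹ u ≥ α √(∫₀¹ u²)` and `∫₀ᵗ u < 0`; hence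
`t = 1 - α²` is the smallest `t > 0` for which `∫₀¹ u ≥ α √(∫₀¹ u²)` forces
`∫₀ᵗ u ≥ 0`. -/
theorem stmt18 (α t : ℝ) (hα0 : 0 < α) (hα1 : α < 1)
    (ht0 : 0 < t) (ht1 : t < 1 - α ^ 2) :
    ∃ u : ℝ → ℝ, MemLp u 2 (volume.restrict (Set.Ioo (0 : ℝ) 1)) ∧
      (∫ x in Set.Ioo (0 : ℝ) 1, u x) ≥
        α * Real.sqrt (∫ x in Set.Ioo (0 : ℝ) 1, (u x) ^ 2) ∧
      (∫ x in Set.Ioo (0 : ℝ) t, u x) < 0 :=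
  stmt18_general α t ht0 ht1
end
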